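/- arXiv:1903.03923 — 9 statements merged into one kernel-verified Lean document; each statement's English description precedes it below -/
import Mathlib

section
/- Let e ≥ 4 be an integer and let u be an odd integer. In the quotient ring (ℤ/2^{e−1}ℤ)[y] / ⟨y² − u·y + 1⟩, the image of y satisfies y^{3·2^{e−3}} = 1. -/
open Polynomial

lemma one_add_eight_pow {Q : Type*} [CommRing Q] (x : Q) (n : ℕ) :
    ∃ z : Q, (1 + 8 * x) ^ (2 ^ n) = 1 + 2 ^ (n + 3) * z := by
  induction n with
  | zero => exact ⟨x, by ring⟩
  | succ n ih =>
    obtain ⟨z, hz⟩ := ih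
    refine ⟨z + 2 ^ (n + 2) * z ^ 2, ?_⟩
    rw [pow_succ, pow_mul, hz]
    ring

theorem pow_three_mul_two_pow_eq_one_in_quotient (e : ℕ) (he : 4 ≤ e) (u : ℤ) (hu : Odd u) :
    (Ideal.Quotient.mk
        (Ideal.span {(Polynomial.X ^ 2 - Polynomial.C (u : ZMod (2 ^ (e - 1))) * Polynomial.X + 1 :
          Polynomial (ZMod (2 ^ (e - 1))))})
        Polynomial.X) ^ (3 * 2 ^ (e - 3)) = 1 := by
  set m := 2 ^ (e - 1)
  set I := Ideal.span {(Polynomial.X ^ 2 - Polynomial.C (u : ZMod m) * Polynomial.X + 1 :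
    Polynomial (ZMod m))}
  set Y : Polynomial (ZMod m) ⧸ I := Ideal.Quotient.mk I Polynomial.X with hY
  set c : Polynomial (ZMod m) ⧸ I := Ideal.Quotient.mk I (Polynomial.C (u : ZMod m)) with hc
  have h0 : Y ^ 2 - c * Y + 1 = 0 := by
    rw [hY, hc, ← map_mul, ← map_pow, ← map_one (Ideal.Quotient.mk I), ← map_sub, ← map_add]
    rw [Ideal.Quotient.eq_zero_iff_mem]
    exact Ideal.subset_span rfl
  -- 8 divides u^2 - 1
  obtain ⟨k, hk⟩ : (8 : ℤ) ∣ u ^ 2 - 1 := by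
    obtain ⟨j, hj⟩ := hu
    have : u ^ 2 - 1 = 8 * (j * (j + 1) / 2) := by
      rcases Int.even_or_odd j with ⟨i, hi⟩ | ⟨i, hi⟩ <;> subst hi <;> subst hj <;> ring_nf <;> omega
    exact ⟨_, this⟩
  have huk : ((u : ZMod m)) ^ 2 - 1 = 8 * (k : ZMod m) := by
    have h := congrArg (Int.cast : ℤ → ZMod m) hk
    push_cast at h
    linear_combination h
  have hpoly : (Polynomial.C ((u : ZMod m))) ^ 2 - 1 = 8 * Polynomial.C ((k : ZMod m)) := by
    rw [← Polynomial.C_pow, ← Polynomial.C_1, ← Polynomial.C_sub, huk, Polynomial.C_mul, map_ofNat]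
  have hc2 : c ^ 2 - 1 = 8 * (Ideal.Quotient.mk I (Polynomial.C ((k : ZMod m)))) := by
    rw [hc, ← map_pow, ← map_one (Ideal.Quotient.mk I), ← map_sub, hpoly, map_mul, map_ofNat]
  set d : Polynomial (ZMod m) ⧸ I := Ideal.Quotient.mk I (Polynomial.C ((k : ZMod m))) with hd
  -- Y^6 = 1 + 8 * b
  have h6 : Y ^ 6 = 1 + 8 * (d * (((c - 1) * Y - 1) * ((c + 1) * Y - 1))) := by
    have key : Y ^ 6 - 1 = (c ^ 2 - 1) * (((c - 1) * Y - 1) * ((c + 1) * Y - 1)) := by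
      linear_combination (Y ^ 4 + c * Y ^ 3 + (c ^ 2 - 1) * Y ^ 2 + (c ^ 3 - 2 * c) * Y - c ^ 2) * h0
    rw [hc2] at key
    linear_combination key
  -- char fact : 2^(e-1) = 0
  have hchar : (2 : Polynomial (ZMod m) ⧸ I) ^ (e - 1) = 0 := by
    have : ((m : ℕ) : ZMod m) = 0 := ZMod.natCast_self m
    have h2 : ((m : ℕ) : Polynomial (ZMod m) ⧸ I) = 0 := by
      rw [← map_natCast (Ideal.Quotient.mk I) m, ← map_natCast (Polynomial.C) m, this]
      simp
    rw [show ((m : ℕ) : Polynomial (ZMod m) ⧸ I) = 2 ^ (e - 1) by push_cast [m]; ring] at h2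
    exact h2
  obtain ⟨z, hz⟩ := one_add_eight_pow (d * (((c - 1) * Y - 1) * ((c + 1) * Y - 1))) (e - 4)
  have hexp : 3 * 2 ^ (e - 3) = 6 * 2 ^ (e - 4) := by
    have : e - 3 = (e - 4) + 1 := by omega
    rw [this, pow_succ]; ring
  have he4 : e - 4 + 3 = e - 1 := by omega
  rw [hexp, pow_mul, h6, hz, he4, hchar]
  ring
end

section
/- Let e ≥ 4 be an integer. In the quotient ring (ℤ/2^eℤ)[y] / ⟨y² − 3y + 1⟩, the image of y satisfies y^{3·2^{e−3}} = 1 + 2^{e−1}·(18y − 7). -/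
open Polynomial

lemma key (k : ℕ) (hk : 1 ≤ k) : ∃ w q : Polynomial ℤ,
    X ^ (3 * 2 ^ k) = 1 + 2 ^ (k + 2) + 2 ^ (k + 3) * w + (X ^ 2 - 3 * X + 1) * q := by
  induction k, hk using Nat.le_induction with
  | base =>
      refine ⟨9 * X - 4, X ^ 4 + 3 * X ^ 3 + 8 * X ^ 2 + 21 * X + 55, ?_⟩
      ring
  | succ k hk ih =>
      obtain ⟨w, q, h⟩ := ih
      refine ⟨w + 2 ^ k * (1 + 2 * w) ^ 2,
        2 * (1 + 2 ^ (k + 2) + 2 ^ (k + 3) * w) * q + (X ^ 2 - 3 * X + 1) * q ^ 2, ?_⟩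
      have h2 : 3 * 2 ^ (k + 1) = (3 * 2 ^ k) * 2 := by ring
      rw [h2, pow_mul, h]
      ring

theorem pow_three_mul_two_pow_in_quotient_three (e : ℕ) (he : 4 ≤ e) :
    (Ideal.Quotient.mk
        (Ideal.span {(Polynomial.X ^ 2 - 3 * Polynomial.X + 1 : Polynomial (ZMod (2 ^ e)))})
        Polynomial.X) ^ (3 * 2 ^ (e - 3)) =
      1 + 2 ^ (e - 1) *
        (18 * Ideal.Quotient.mk
          (Ideal.span {(Polynomial.X ^ 2 - 3 * Polynomial.X + 1 : Polynomial (ZMod (2 ^ e)))})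
          Polynomial.X - 7) := by
  set R := ZMod (2 ^ e)
  set I := Ideal.span {(X ^ 2 - 3 * X + 1 : Polynomial R)}
  set ψ : Polynomial ℤ →+* (Polynomial R ⧸ I) :=
    (Ideal.Quotient.mk I).comp (Polynomial.mapRingHom (Int.castRingHom R))
  obtain ⟨w, q, h⟩ := key (e - 3) (by omega)
  have hψ := congrArg ψ h
  have hψf : ψ (X ^ 2 - 3 * X + 1) = 0 := by
    have : (Polynomial.mapRingHom (Int.castRingHom R)) (X ^ 2 - 3 * X + 1) =
        (X ^ 2 - 3 * X + 1 : Polynomial R) := by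
      simp [Polynomial.map_ofNat]
    simp only [ψ, RingHom.comp_apply, this]
    exact Ideal.Quotient.eq_zero_iff_mem.2 (Ideal.subset_span rfl)
  have h2e : (2 : Polynomial R ⧸ I) ^ e = 0 := by
    have : ((2 ^ e : ℕ) : Polynomial R ⧸ I) = 0 := by
      have : ((2 ^ e : ℕ) : R) = 0 := ZMod.natCast_self _
      rw [← map_natCast ((Ideal.Quotient.mk I).comp (C : R →+* Polynomial R)), this, map_zero]
    push_cast at this
    exact_mod_cast this
  have hψX : ψ X = Ideal.Quotient.mk I X := by
    simp [ψ]
  have he3 : e - 3 + 3 = e := by omega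
  have he2 : e - 3 + 2 = e - 1 := by omega
  simp only [map_add, map_mul, map_pow, map_one, map_ofNat, hψf, hψX, zero_mul,
    add_zero, he3, he2, h2e] at hψ
  rw [hψ]
  have h8 : (2 : Polynomial R ⧸ I) ^ (e - 1) * 8 = 0 := by
    have : (2 : Polynomial R ⧸ I) ^ (e - 1) * 8 = 2 ^ (e - 1 + 3) := by ring
    rw [this]
    have : e - 1 + 3 = e + 2 := by omega
    rw [this, pow_add, h2e, zero_mul]
  have h18 : (2 : Polynomial R ⧸ I) ^ (e - 1) * 18 = 0 := by
    have : (2 : Polynomial R ⧸ I) ^ (e - 1) * 18 = 2 ^ (e - 1 + 1) * 9 := by ring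
    rw [this]
    have : e - 1 + 1 = e := by omega
    rw [this, h2e, zero_mul]
  have : (2:Polynomial R ⧸ I) ^ (e - 1) * (18 * Ideal.Quotient.mk I X - 7) =
      2 ^ (e - 1) * 18 * Ideal.Quotient.mk I X - 2 ^ (e-1) * 7 := by ring
  rw [this, h18, zero_mul, zero_sub]
  linear_combination h8
end

section
/- Let e ≥ 3 be an integer and let u be an integer with u ≡ 0 (mod 4). In the quotient ring (ℤ/2^eℤ)[y] / ⟨y² − u·y + 1⟩, the image of y satisfies y^{2^{e−1}} = 1. -/
/-!
Write `x` for the class of `y`, so `x² - u x + 1 = 0` with `4 ∣ u`. Then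
`x⁴ - 1 = (x² - 1)(x² + 1) = (u x - 2) u x` is divisible by `8`, and `z² - 1 = (z - 1)(z - 1 + 2)`
shows that squaring raises the power of `2` dividing `z - 1` by one, so `2ⁿ⁺¹ ∣ x^(2ⁿ) - 1` for
`n ≥ 2`. For `n = e - 1` the divisor `2ᵉ` vanishes in the quotient.
-/

open Polynomial

theorem two_pow_add_dvd_pow_two_pow_sub_one {R : Type*} [CommRing R] {y : R} {k : ℕ}
    (hk : 1 ≤ k) (h : 2 ^ k ∣ y - 1) (n : ℕ) : 2 ^ (k + n) ∣ y ^ 2 ^ n - 1 := by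
  induction n with
  | zero => simpa using h
  | succ n ih =>
    have h_two : (2 : R) ∣ y ^ 2 ^ n - 1 + 2 :=
      dvd_add ((dvd_pow_self 2 (by omega)).trans ih) dvd_rfl
    calc (2 : R) ^ (k + (n + 1)) = 2 ^ (k + n) * 2 := by ring
      _ ∣ (y ^ 2 ^ n - 1) * (y ^ 2 ^ n - 1 + 2) := mul_dvd_mul ih h_two
      _ = y ^ 2 ^ (n + 1) - 1 := by ring

theorem eight_dvd_pow_four_sub_one {R : Type*} [CommRing R] {x u : R} (hu : 4 ∣ u)
    (hx : x ^ 2 - u * x + 1 = 0) : 8 ∣ x ^ 4 - 1 := by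
  obtain ⟨v, rfl⟩ := hu
  exact ⟨v * x * (2 * v * x - 1), by linear_combination (x ^ 2 + 4 * v * x - 1) * hx⟩

theorem two_pow_succ_dvd_pow_two_pow_sub_one {R : Type*} [CommRing R] {x u : R} (hu : 4 ∣ u)
    (hx : x ^ 2 - u * x + 1 = 0) {n : ℕ} (hn : 2 ≤ n) : 2 ^ (n + 1) ∣ x ^ 2 ^ n - 1 := by
  obtain ⟨m, rfl⟩ := Nat.exists_eq_add_of_le hn
  have h_eight : (2 : R) ^ 3 ∣ x ^ 4 - 1 := by
    simpa only [show (2 : R) ^ 3 = 8 by norm_num] using eight_dvd_pow_four_sub_one hu hx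
  calc (2 : R) ^ (2 + m + 1) = 2 ^ (3 + m) := by ring
    _ ∣ (x ^ 4) ^ 2 ^ m - 1 := two_pow_add_dvd_pow_two_pow_sub_one (by norm_num) h_eight m
    _ = x ^ 2 ^ (2 + m) - 1 := by ring

theorem natCast_pow_eq_zero_of_zmod_algebra {A : Type*} [Ring A] (p e : ℕ)
    [Algebra (ZMod (p ^ e)) A] : (p : A) ^ e = 0 := by
  rw [← map_natCast (algebraMap (ZMod (p ^ e)) A), ← map_pow, ← Nat.cast_pow, ZMod.natCast_self,
    map_zero]

theorem pow_two_pow_eq_one_in_quotient (e : ℕ) (he : 3 ≤ e) (u : ℤ) (hu : (4 : ℤ) ∣ u) :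
    (Ideal.Quotient.mk
        (Ideal.span {(Polynomial.X ^ 2 - Polynomial.C (u : ZMod (2 ^ e)) * Polynomial.X + 1 :
          Polynomial (ZMod (2 ^ e)))})
        Polynomial.X) ^ (2 ^ (e - 1)) = 1 := by
  set I := Ideal.span {(X ^ 2 - C (u : ZMod (2 ^ e)) * X + 1 : (ZMod (2 ^ e))[X])}
  have hroot : Ideal.Quotient.mk I X ^ 2 - (u : (ZMod (2 ^ e))[X] ⧸ I) * Ideal.Quotient.mk I X
      + 1 = 0 := by
    have h := Ideal.Quotient.mk_singleton_self (X ^ 2 - C (u : ZMod (2 ^ e)) * X + 1)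
    rwa [map_add, map_sub, map_mul, map_pow, map_one, C_eq_intCast, map_intCast] at h
  have hu' : (4 : (ZMod (2 ^ e))[X] ⧸ I) ∣ u := by
    simpa using _root_.map_dvd (Int.castRingHom _) hu
  have hchar : (2 : (ZMod (2 ^ e))[X] ⧸ I) ^ e = 0 := by
    exact_mod_cast natCast_pow_eq_zero_of_zmod_algebra 2 e
  have h := two_pow_succ_dvd_pow_two_pow_sub_one hu' hroot (n := e - 1) (by omega)
  rwa [Nat.sub_add_cancel (by omega), hchar, zero_dvd_iff, sub_eq_zero] at h
end

section
/- Let e ≥ 1 be an integer and let k and l be positive integers with k ≡ l (mod 3·2^{e−1}). Then D_k(u, 1) = D_l(u, 1) in ℤ/2^eℤ for every u ∈ ℤ/2^eℤ, where D_k denotes the Dickson polynomial of the first kind evaluated over ℤ/2^eℤ. -/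
open Polynomial

/-! Write `s n = D_n(u, 1)` and `N = 3 * 2 ^ d`. Since `s` satisfies a second-order linear
recurrence, it is `N`-periodic modulo `2 ^ (d + 1)` as soon as `s N ≡ 2` and `s (N + 1) ≡ u`.
For integral `u` both congruences follow by induction on `d` from the doubling formulas
`s (2m) - 2 = (s m - 2) (s m + 2)` and `s (2m + 1) - u = (s m - 2) s (m + 1) + 2 (s (m + 1) - u)`.
The induction for the second one needs, for odd `u`, the sharper `s N ≡ 2 mod 2 ^ (d + 2)`,
and for even `u`, that every `s n` is even. -/

namespace Polynomial

section CommRing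

variable {R : Type*} [CommRing R]

theorem dickson_one_one_mul_dickson_one_one {m n : ℕ} (h : n ≤ m) :
    dickson 1 (1 : R) m * dickson 1 1 n = dickson 1 1 (m + n) + dickson 1 1 (m - n) := by
  simp only [dickson_one_one_eq_chebyshev_C, Chebyshev.C_mul_C]
  push_cast [h]
  rfl

theorem dickson_one_one_two_mul (m : ℕ) :
    dickson 1 (1 : R) (2 * m) = dickson 1 1 m ^ 2 - 2 := by
  have h := dickson_one_one_mul_dickson_one_one (R := R) (le_refl m)
  rw [Nat.sub_self, dickson_zero, ← two_mul] at h
  linear_combination -h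

theorem dickson_one_one_two_mul_add_one (m : ℕ) :
    dickson 1 (1 : R) (2 * m + 1) = dickson 1 1 m * dickson 1 1 (m + 1) - X := by
  have h := dickson_one_one_mul_dickson_one_one (R := R) (Nat.le_add_right m 1)
  rw [Nat.add_sub_cancel_left, dickson_one, add_right_comm, ← two_mul] at h
  linear_combination -h

theorem eval_intCast_dickson_one_one (x : ℤ) (n : ℕ) :
    (dickson 1 (1 : R) n).eval (x : R) = (((dickson 1 (1 : ℤ) n).eval x : ℤ) : R) := by
  simpa [map_dickson] using eval_intCast_map (Int.castRingHom R) (dickson 1 (1 : ℤ) n) x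

theorem periodic_eval_dickson_one_one (u : R) {N : ℕ} (h₀ : (dickson 1 (1 : R) N).eval u = 2)
    (h₁ : (dickson 1 (1 : R) (N + 1)).eval u = u) :
    Function.Periodic (fun n ↦ (dickson 1 (1 : R) n).eval u) N := by
  intro n
  induction n using Nat.twoStepInduction with
  | zero => simpa [dickson_zero, show (3 : R) - 1 = 2 by norm_num] using h₀
  | one => simpa [add_comm] using h₁
  | more n ih₀ ih₁ =>
    simp only [add_right_comm n 2 N, dickson_add_two, eval_sub, eval_mul, eval_X, eval_C] at *
    rw [← ih₀, ← ih₁, add_right_comm]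

end CommRing

section Int

theorem two_dvd_eval_dickson_one_one {u : ℤ} (hu : 2 ∣ u) (n : ℕ) :
    2 ∣ (dickson 1 (1 : ℤ) n).eval u := by
  induction n using Nat.twoStepInduction with
  | zero => simp [dickson_zero]
  | one => simpa using hu
  | more n ih₀ _ =>
    rw [dickson_add_two]
    simpa using dvd_sub (dvd_mul_of_dvd_left hu _) ih₀

theorem two_pow_succ_dvd_eval_dickson_two_mul_sub_two (u : ℤ) {j m : ℕ} (hj : j ≠ 0)
    (h : 2 ^ j ∣ (dickson 1 (1 : ℤ) m).eval u - 2) :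
    2 ^ (j + 1) ∣ (dickson 1 (1 : ℤ) (2 * m)).eval u - 2 := by
  set s := (dickson 1 (1 : ℤ) m).eval u
  have h_factor : (dickson 1 (1 : ℤ) (2 * m)).eval u - 2 = (s - 2) * (s - 2 + 4) := by
    simp only [dickson_one_one_two_mul, eval_sub, eval_pow, eval_ofNat, s]
    ring
  rw [h_factor, pow_succ]
  exact mul_dvd_mul h (dvd_add ((dvd_pow_self 2 hj).trans h) (by norm_num))

theorem two_pow_add_dvd_eval_dickson_two_pow_mul_sub_two (u : ℤ) {j m : ℕ} (hj : j ≠ 0)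
    (h : 2 ^ j ∣ (dickson 1 (1 : ℤ) m).eval u - 2) (i : ℕ) :
    2 ^ (j + i) ∣ (dickson 1 (1 : ℤ) (2 ^ i * m)).eval u - 2 := by
  induction i with
  | zero => simpa using h
  | succ i ih =>
    rw [pow_succ', mul_assoc, ← add_assoc]
    exact two_pow_succ_dvd_eval_dickson_two_mul_sub_two u (by omega) ih

theorem eval_dickson_one_one_three (u : ℤ) :
    (dickson 1 (1 : ℤ) 3).eval u = u ^ 3 - 3 * u := by
  simp [dickson_add_two, dickson_zero]
  ring

theorem two_pow_succ_dvd_eval_dickson_three_mul_two_pow_sub_two (u : ℤ) (d : ℕ) :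
    2 ^ (d + 1) ∣ (dickson 1 (1 : ℤ) (3 * 2 ^ d)).eval u - 2 := by
  have h_three : 2 ^ 1 ∣ (dickson 1 (1 : ℤ) 3).eval u - 2 := by
    rw [eval_dickson_one_one_three, pow_one, ← even_iff_two_dvd]
    simp [parity_simps, show ¬Even (3 : ℤ) by decide]
  simpa [add_comm, mul_comm] using
    two_pow_add_dvd_eval_dickson_two_pow_mul_sub_two u one_ne_zero h_three d

theorem two_pow_add_two_dvd_eval_dickson_three_mul_two_pow_sub_two {u : ℤ} (hu : Odd u)
    (d : ℕ) : 2 ^ (d + 2) ∣ (dickson 1 (1 : ℤ) (3 * 2 ^ d)).eval u - 2 := by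
  have h_three : 2 ^ 2 ∣ (dickson 1 (1 : ℤ) 3).eval u - 2 := by
    obtain ⟨v, rfl⟩ := hu
    rw [eval_dickson_one_one_three]
    exact ⟨(v + 1) ^ 2 * (2 * v - 1), by ring⟩
  simpa [add_comm, mul_comm] using
    two_pow_add_dvd_eval_dickson_two_pow_mul_sub_two u two_ne_zero h_three d

theorem two_pow_succ_dvd_eval_dickson_three_mul_two_pow_add_one_sub (u : ℤ) (d : ℕ) :
    2 ^ (d + 1) ∣ (dickson 1 (1 : ℤ) (3 * 2 ^ d + 1)).eval u - u := by
  induction d with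
  | zero =>
    rw [pow_one, ← even_iff_two_dvd]
    simp [dickson_add_two, dickson_zero, parity_simps]
  | succ d ih =>
    set N := 3 * 2 ^ d
    have h_factor : (dickson 1 (1 : ℤ) (3 * 2 ^ (d + 1) + 1)).eval u - u =
        ((dickson 1 (1 : ℤ) N).eval u - 2) * (dickson 1 (1 : ℤ) (N + 1)).eval u +
          2 * ((dickson 1 (1 : ℤ) (N + 1)).eval u - u) := by
      rw [show 3 * 2 ^ (d + 1) = 2 * N by ring, dickson_one_one_two_mul_add_one]
      simp only [eval_sub, eval_mul, eval_X]
      ring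
    rw [h_factor]
    refine dvd_add ?_ (by rw [pow_succ']; exact mul_dvd_mul_left 2 ih)
    rcases Int.even_or_odd u with hu | hu
    · rw [pow_succ]
      exact mul_dvd_mul (two_pow_succ_dvd_eval_dickson_three_mul_two_pow_sub_two u d)
        (two_dvd_eval_dickson_one_one (even_iff_two_dvd.mp hu) _)
    · exact (two_pow_add_two_dvd_eval_dickson_three_mul_two_pow_sub_two hu d).mul_right _

end Int

end Polynomial

theorem dickson_eval_congr_two_pow_general (e : ℕ) (k l : ℕ)
    (hkl : k ≡ l [MOD 3 * 2 ^ (e - 1)]) (u : ZMod (2 ^ e)) :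
    Polynomial.eval u (Polynomial.dickson 1 1 k) = Polynomial.eval u (Polynomial.dickson 1 1 l) := by
  obtain _ | d := e
  · exact Subsingleton.elim (α := ZMod 1) _ _
  obtain ⟨x, rfl⟩ := ZMod.intCast_surjective u
  have h_cong {n : ℕ} {a : ℤ} (h : 2 ^ (d + 1) ∣ (dickson 1 (1 : ℤ) n).eval x - a) :
      (dickson 1 (1 : ZMod (2 ^ (d + 1))) n).eval (x : ZMod (2 ^ (d + 1))) = a := by
    rw [eval_intCast_dickson_one_one]
    exact ((ZMod.intCast_eq_intCast_iff_dvd_sub _ _ _).mpr (by exact_mod_cast h)).symm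
  have h_periodic := periodic_eval_dickson_one_one (x : ZMod (2 ^ (d + 1))) (N := 3 * 2 ^ d)
    (by exact_mod_cast h_cong (two_pow_succ_dvd_eval_dickson_three_mul_two_pow_sub_two x d))
    (h_cong (two_pow_succ_dvd_eval_dickson_three_mul_two_pow_add_one_sub x d))
  have hkl : k % (3 * 2 ^ d) = l % (3 * 2 ^ d) := hkl
  rw [← h_periodic.map_mod_nat k, ← h_periodic.map_mod_nat l, hkl]

theorem dickson_eval_congr_two_pow (e : ℕ) (he : 1 ≤ e) (k l : ℕ) (hk : 0 < k) (hl : 0 < l)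
    (hkl : k ≡ l [MOD 3 * 2 ^ (e - 1)]) (u : ZMod (2 ^ e)) :
    Polynomial.eval u (Polynomial.dickson 1 1 k) = Polynomial.eval u (Polynomial.dickson 1 1 l) :=
  dickson_eval_congr_two_pow_general e k l hkl u
end

section
/- Let e ≥ 3 be an integer. Then D_{3·2^{e−2}+1}(u, 1) = u in ℤ/2^eℤ for every u ∈ ℤ/2^eℤ, where D_k denotes the Dickson polynomial of the first kind evaluated over ℤ/2^eℤ. -/
open Polynomial

/-! Adjoin a root `y` of `X² - u X + 1`, so that `u = y + y⁻¹` and `D_k(u, 1) = y^k + y^(-k)`.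
For `m = 3·2^(e-2)` one has `y^(m+1) + y^(-(m+1)) - (y + y⁻¹) = y^(-(m+1)) (y^m - 1)(y^(m+2) - 1)`,
so it suffices that this product vanishes modulo `2^e`. For odd `u`, `y³ ≡ -u` and hence
`y⁶ ≡ 1 (mod 8)`, which lifts to `y^m = 1`. For even `u = 2v`, `y⁴ = 1 + 4w` with
`w = vy(vy - 1)`. For `e = 3` this gives `y⁸ ≡ 1 (mod 8)`; for `e ≥ 4` it lifts to
`y^(2^(e-2)) = 1 + 2^(e-2)(w + 2s)`, which is precise enough because `w(vy - 1)` is even,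
`v(v + 1)` being even. -/

theorem AdjoinRoot.algebraMap_injective_of_monic {R : Type*} [CommRing R] [Nontrivial R]
    {f : R[X]} (hf : f.Monic) (hdeg : f.natDegree ≠ 0) :
    Function.Injective (algebraMap R (AdjoinRoot f)) := by
  have := hf.free_adjoinRoot
  have : Nontrivial (AdjoinRoot f) := Ideal.Quotient.nontrivial_iff.mpr <| by
    simpa [Ideal.span_singleton_eq_top, hf.isUnit_iff] using fun h => hdeg (by simp [h])
  exact FaithfulSMul.algebraMap_injective R _

section PowersOfTwo

variable {S : Type*} [CommRing S]

theorem exists_one_add_four_mul_pow_two_pow_eq (w : S) (j : ℕ) :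
    ∃ s : S, (1 + 4 * w) ^ 2 ^ j = 1 + 2 ^ (j + 2) * (w + 2 * s) := by
  induction j with
  | zero => exact ⟨0, by ring⟩
  | succ j ih =>
    obtain ⟨s, hs⟩ := ih
    refine ⟨s + 2 ^ j * (w + 2 * s) ^ 2, ?_⟩
    rw [pow_succ, pow_mul, hs]
    ring

theorem pow_add_pow_eq_add_of_mul_eq_one {y z : S} (hyz : y * z = 1) {n : ℕ}
    (h : (y ^ n - 1) * (y ^ (n + 2) - 1) = 0) :
    y ^ (n + 1) + z ^ (n + 1) = y + z := by
  have hexpand : z ^ (n + 1) * ((y ^ n - 1) * (y ^ (n + 2) - 1)) =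
      (y * z) ^ (n + 1) * y ^ (n + 1) - (y * z) ^ (n + 1) * y - (y * z) ^ n * z
        + z ^ (n + 1) := by ring
  rw [h, hyz] at hexpand
  linear_combination -hexpand

variable {j : ℕ} {y : S}

theorem pow_three_mul_two_pow_eq_one_of_sq_eq_one_add_eight_mul (h2 : (2 : S) ^ (j + 3) = 0)
    {u c : S} (hy : y ^ 2 = u * y - 1) (hu : u ^ 2 = 1 + 8 * c) :
    y ^ (3 * 2 ^ (j + 1)) = 1 := by
  set w := 2 * (c + 8 * c ^ 2 * y ^ 2 - 2 * c * u * y)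
  have h3 : y ^ 3 = 8 * c * y - u := by linear_combination (y + u) * hy + y * hu
  have h6 : y ^ 6 = 1 + 4 * w := by linear_combination (y ^ 3 + 8 * c * y - u) * h3 + hu
  obtain ⟨s, hs⟩ := exists_one_add_four_mul_pow_two_pow_eq w j
  calc y ^ (3 * 2 ^ (j + 1)) = (y ^ 6) ^ 2 ^ j := by rw [← pow_mul]; ring_nf
    _ = 1 := by rw [h6, hs]; linear_combination (c + 8 * c ^ 2 * y ^ 2 - 2 * c * u * y + s) * h2

theorem pow_three_mul_two_pow_sub_one_mul_eq_zero_of_sq_eq_two_mul (h2 : (2 : S) ^ (j + 3) = 0)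
    {v c : S} (hy : y ^ 2 = 2 * v * y - 1) (hv : v ^ 2 + v = 2 * c) :
    (y ^ (3 * 2 ^ (j + 1)) - 1) * (y ^ (3 * 2 ^ (j + 1) + 2) - 1) = 0 := by
  set w := v * y * (v * y - 1)
  have h4 : y ^ 4 = 1 + 4 * w := by linear_combination (y ^ 2 + 2 * v * y - 1) * hy
  cases j with
  | zero =>
    linear_combination (y ^ 6 - 1) * ((y ^ 4 + 1 + 4 * w) * h4 + (w + 2 * w ^ 2) * h2)
  | succ i =>
    set t := (v ^ 4 - v ^ 2) * y ^ 2 + (1 - v) * c * y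
    have hw : w * (v * y - 1) = 2 * t := by linear_combination v ^ 3 * y * hy + (1 - v) * y * hv
    obtain ⟨s, hs⟩ := exists_one_add_four_mul_pow_two_pow_eq w i
    have hP : (2 : S) ^ (i + 2) * 2 ^ (i + 2) = 0 := by linear_combination 2 ^ i * h2
    have h4P : 4 * (2 : S) ^ (i + 2) = 0 := by linear_combination h2
    generalize (2 : S) ^ (i + 2) = P at hs hP h4P
    set W := w + 2 * s
    -- `y^m = 1 + 3PW`, so the product is `6PW(vy - 1)`, and `W(vy - 1)` is even.
    have hm : y ^ (3 * 2 ^ (i + 1 + 1)) = 1 + 3 * P * W := by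
      calc y ^ (3 * 2 ^ (i + 1 + 1)) = ((y ^ 4) ^ 2 ^ i) ^ 3 := by
            rw [← pow_mul, ← pow_mul]; ring_nf
        _ = 1 + 3 * P * W := by rw [h4, hs]; linear_combination (3 * W ^ 2 + P * W ^ 3) * hP
    rw [pow_add y _ 2, hm]
    linear_combination 3 * P * W * (1 + 3 * P * W) * hy + 9 * W ^ 2 * (2 * v * y - 1) * hP
      + 6 * P * hw + 3 * (t + s * (v * y - 1)) * h4P

theorem pow_three_mul_two_pow_sub_one_mul_eq_zero (h2 : (2 : S) ^ (j + 3) = 0) {n : ℤ}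
    (hy : y ^ 2 = n * y - 1) :
    (y ^ (3 * 2 ^ (j + 1)) - 1) * (y ^ (3 * 2 ^ (j + 1) + 2) - 1) = 0 := by
  rcases Int.even_or_odd n with ⟨v, rfl⟩ | hn
  · obtain ⟨c, hc⟩ := Int.even_mul_succ_self v
    refine pow_three_mul_two_pow_sub_one_mul_eq_zero_of_sq_eq_two_mul h2 (v := v) (c := c) ?_ ?_
    · push_cast at hy
      linear_combination hy
    · have := congrArg (Int.cast : ℤ → S) hc
      push_cast at this
      linear_combination this
  · obtain ⟨c, hc⟩ := Int.eight_dvd_sq_sub_one_of_odd hn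
    have hu : (n : S) ^ 2 = 1 + 8 * c := by
      have := congrArg (Int.cast : ℤ → S) hc
      push_cast at this
      linear_combination this
    rw [pow_three_mul_two_pow_eq_one_of_sq_eq_one_add_eight_mul h2 hy hu]
    ring

end PowersOfTwo

theorem AdjoinRoot.root_sq_eq_mul_root_sub_one {R : Type*} [CommRing R] (u : R) :
    root (X ^ 2 - C u * X + 1) ^ 2 = algebraMap R _ u * root (X ^ 2 - C u * X + 1) - 1 := by
  have := eval₂_root (X ^ 2 - C u * X + 1)
  simp only [eval₂_add, eval₂_sub, eval₂_mul, eval₂_X_pow, eval₂_C, eval₂_X, eval₂_one,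
    ← algebraMap_eq] at this
  linear_combination this

theorem Polynomial.eval_dickson_one_one_succ_eq_self {R : Type*} [CommRing R] {u : R} {n : ℕ}
    (h : (AdjoinRoot.root (X ^ 2 - C u * X + 1) ^ n - 1) *
      (AdjoinRoot.root (X ^ 2 - C u * X + 1) ^ (n + 2) - 1) = 0) :
    eval u (dickson 1 1 (n + 1)) = u := by
  cases subsingleton_or_nontrivial R
  · exact Subsingleton.elim _ _
  set f : R[X] := X ^ 2 - C u * X + 1
  set y := AdjoinRoot.root f
  have hy : y ^ 2 = algebraMap R _ u * y - 1 := AdjoinRoot.root_sq_eq_mul_root_sub_one u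
  have hyz : y * (algebraMap R _ u - y) = 1 := by linear_combination -hy
  have hf : f.Monic := by simp only [f]; monicity!
  have hdeg : f.natDegree = 2 := by simp only [f]; compute_degree!
  apply AdjoinRoot.algebraMap_injective_of_monic hf (hdeg ▸ two_ne_zero)
  rw [← eval_map_apply, map_dickson, map_one, ← add_sub_cancel y (algebraMap R _ u),
    dickson_one_one_eval_add_inv y _ hyz, pow_add_pow_eq_add_of_mul_eq_one hyz h]

theorem dickson_three_mul_two_pow_add_one_eval (e : ℕ) (he : 3 ≤ e) (u : ZMod (2 ^ e)) :
    Polynomial.eval u (Polynomial.dickson 1 1 (3 * 2 ^ (e - 2) + 1)) = u := by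
  obtain ⟨j, rfl⟩ : ∃ j, e = j + 3 := ⟨e - 3, by omega⟩
  obtain ⟨n, rfl⟩ := ZMod.intCast_surjective u
  rw [show j + 3 - 2 = j + 1 by omega]
  set S := AdjoinRoot (X ^ 2 - C (n : ZMod (2 ^ (j + 3))) * X + 1)
  have h2 : (2 : S) ^ (j + 3) = 0 := by
    have : ((2 ^ (j + 3) : ℕ) : S) = 0 := by
      rw [← map_natCast (algebraMap (ZMod (2 ^ (j + 3))) S), ZMod.natCast_self, map_zero]
    exact_mod_cast this
  have hy : AdjoinRoot.root _ ^ 2 = (n : S) * AdjoinRoot.root _ - 1 := by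
    simpa using AdjoinRoot.root_sq_eq_mul_root_sub_one (n : ZMod (2 ^ (j + 3)))
  exact eval_dickson_one_one_succ_eq_self (pow_three_mul_two_pow_sub_one_mul_eq_zero h2 hy)
end

section
/- Let p be an odd prime, let e ≥ 1 be an integer, and let k and l be positive integers with k ≡ l (mod p^{e−1}·((p² − 1)/2)). Then D_k(u, 1) = D_l(u, 1) in ℤ/p^eℤ for every u ∈ ℤ/p^eℤ, where D_k denotes the Dickson polynomial of the first kind evaluated over ℤ/p^eℤ. -/
/-!
Adjoin to `R = ℤ/p^e` a root `y` of `X² - uX + 1` and put `v = u - y = y⁻¹`, so that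
`D_n(u, 1) = y^n + v^n`. Modulo `p` the Frobenius sends `y` to a root of the same polynomial,
so `p ∣ (y^p - y)(y^p - v)`. Up to units the two factors are `y^(p-1) - 1` and `y^(p+1) - 1`,
which both divide `t = y^N - 1` for `N = (p² - 1)/2`; hence `p` divides `t²` and `t(y - v)`.
Raising `1 + t` to the power `p^(e-1)` then gives `y^M - 1 = p^(e-1) t g` for `M = p^(e-1) N`,
so `(y^M - 1)² = 0` and `(y^M - 1)(y - v) = 0`, which is exactly what makes `n ↦ y^n + v^n`
periodic with period `M`.
-/

open Polynomial

theorem Odd.sub_one_dvd_and_add_one_dvd_sq_sub_one_div_two {p : ℕ} (hp : Odd p) :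
    p - 1 ∣ (p ^ 2 - 1) / 2 ∧ p + 1 ∣ (p ^ 2 - 1) / 2 := by
  obtain ⟨m, rfl⟩ := hp
  have h : ((2 * m + 1) ^ 2 - 1) / 2 = 2 * m * (m + 1) := by
    rw [Nat.sub_eq_of_eq_add (by ring : (2 * m + 1) ^ 2 = 2 * (2 * m * (m + 1)) + 1),
      Nat.mul_div_cancel_left _ two_pos]
  rw [h, Nat.add_sub_cancel]
  exact ⟨Dvd.intro _ rfl, ⟨m, by ring⟩⟩

section
variable {S : Type*} [CommRing S]

theorem periodic_pow_add_pow_of_mul_eq_one {y v : S} (hyv : y * v = 1) {M : ℕ}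
    (hsq : (y ^ M - 1) ^ 2 = 0) (hmul : (y ^ M - 1) * (y - v) = 0) :
    Function.Periodic (fun n ↦ y ^ n + v ^ n) M := by
  intro n
  have hvM : v ^ M = 2 - y ^ M := by
    have hinv : y ^ M * v ^ M = 1 := by rw [← mul_pow, hyv, one_pow]
    linear_combination v ^ M * hsq - (y ^ M - 2) * hinv
  obtain ⟨q, hq⟩ := sub_dvd_pow_sub_pow y v n
  have hdiff : (y ^ M - 1) * (y ^ n - v ^ n) = 0 := by
    rw [hq, ← mul_assoc, hmul, zero_mul]
  simp only [pow_add, hvM]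
  linear_combination hdiff

theorem natCast_dvd_pow_sub_mul_pow_sub {p : ℕ} (hp : p.Prime) {y v : S} (hyv : y * v = 1)
    (hfermat : (p : S) ∣ (y + v) ^ p - (y + v)) : (p : S) ∣ (y ^ p - y) * (y ^ p - v) := by
  obtain ⟨r, hr⟩ := exists_add_pow_prime_eq hp (y ^ 2) 1
  obtain ⟨c, hc⟩ := hfermat
  have hsq : (y + v) * y = y ^ 2 + 1 := by linear_combination hyv
  refine ⟨c * y ^ p - y ^ 2 * r, ?_⟩
  have : ((y + v) * y) ^ p = (y ^ p) ^ 2 + 1 + p * y ^ 2 * r := by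
    rw [hsq, hr, one_pow, mul_one, ← pow_mul, ← pow_mul, mul_comm]
  rw [mul_pow] at this
  linear_combination y ^ p * hc - this + hyv

theorem exists_one_add_pow_prime_eq {p : ℕ} (hp : p.Prime) (hodd : Odd p) {x : S}
    (hx : (p : S) ∣ x ^ 2) : ∃ g, (1 + x) ^ p = 1 + p * x * g := by
  obtain ⟨r, hr⟩ := exists_add_pow_prime_eq hp 1 x
  obtain ⟨m, hm⟩ := hodd
  have hm0 : m ≠ 0 := by rintro rfl; exact hp.ne_one hm
  obtain ⟨c, hc⟩ := dvd_pow hx hm0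
  refine ⟨c + r, ?_⟩
  rw [hr, show x ^ p = x * (x ^ 2) ^ m by rw [hm, pow_succ', pow_mul], hc]
  ring

theorem exists_one_add_pow_prime_pow_eq {p : ℕ} (hp : p.Prime) (hodd : Odd p) {x : S}
    (hx : (p : S) ∣ x ^ 2) : ∀ j : ℕ, ∃ g, (1 + x) ^ p ^ j = 1 + p ^ j * x * g
  | 0 => ⟨1, by simp⟩
  | j + 1 => by
    obtain ⟨g, hg⟩ := exists_one_add_pow_prime_pow_eq hp hodd hx j
    have hx' : (p : S) ∣ (p ^ j * x * g) ^ 2 := by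
      rw [mul_pow, mul_pow]
      exact (hx.mul_left _).mul_right _
    obtain ⟨h, hh⟩ := exists_one_add_pow_prime_eq hp hodd hx'
    exact ⟨g * h, by rw [pow_succ, pow_mul, hg, hh]; ring⟩

theorem natCast_dvd_pow_sub_one_sq_and_mul {p N : ℕ} (hp : p.Prime) {y v : S} (hyv : y * v = 1)
    (hfermat : (p : S) ∣ (y + v) ^ p - (y + v)) (hN₁ : p - 1 ∣ N) (hN₂ : p + 1 ∣ N) :
    (p : S) ∣ (y ^ N - 1) ^ 2 ∧ (p : S) ∣ (y ^ N - 1) * (y - v) := by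
  have hy : IsUnit y := IsUnit.of_mul_eq_one v hyv
  have hv : IsUnit v := IsUnit.of_mul_eq_one_right y hyv
  have ha : y ^ p - y ∣ y ^ N - 1 := by
    have : y ^ p - y = y * (y ^ (p - 1) - 1) := by
      rw [mul_sub, ← pow_succ', Nat.sub_add_cancel hp.one_le, mul_one]
    rw [this, hy.mul_left_dvd]
    obtain ⟨k, rfl⟩ := hN₁
    exact pow_one_sub_dvd_pow_mul_sub_one y _ k
  have hb : y ^ p - v ∣ y ^ N - 1 := by
    have : y ^ p - v = v * (y ^ (p + 1) - 1) := by linear_combination (-y ^ p) * hyv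
    rw [this, hv.mul_left_dvd]
    obtain ⟨k, rfl⟩ := hN₂
    exact pow_one_sub_dvd_pow_mul_sub_one y _ k
  obtain ⟨a, ha⟩ := ha
  obtain ⟨b, hb⟩ := hb
  have hab := natCast_dvd_pow_sub_mul_pow_sub hp hyv hfermat
  constructor
  · exact hab.trans ⟨a * b, by linear_combination (y ^ N - 1) * ha + (y ^ p - y) * a * hb⟩
  · exact hab.trans ⟨a - b, by linear_combination (y ^ p - v) * ha - (y ^ p - y) * hb⟩

theorem periodic_pow_add_pow_of_natCast_pow_eq_zero {p e N : ℕ} (hp : p.Prime) (hodd : Odd p)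
    (he : 1 ≤ e) (hpe : (p : S) ^ e = 0) {y v : S} (hyv : y * v = 1)
    (hfermat : (p : S) ∣ (y + v) ^ p - (y + v)) (hN₁ : p - 1 ∣ N) (hN₂ : p + 1 ∣ N) :
    Function.Periodic (fun n ↦ y ^ n + v ^ n) (p ^ (e - 1) * N) := by
  obtain ⟨⟨c, hc⟩, ⟨d, hd⟩⟩ := natCast_dvd_pow_sub_one_sq_and_mul hp hyv hfermat hN₁ hN₂
  obtain ⟨g, hg⟩ := exists_one_add_pow_prime_pow_eq hp hodd ⟨c, hc⟩ (e - 1)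
  have hw : y ^ (p ^ (e - 1) * N) - 1 = p ^ (e - 1) * (y ^ N - 1) * g := by
    rw [mul_comm, pow_mul, ← add_sub_cancel (1 : S) (y ^ N), hg]
    ring
  have hpe' : (p : S) ^ (e - 1) * p = 0 := by rw [← pow_succ, Nat.sub_add_cancel he, hpe]
  apply periodic_pow_add_pow_of_mul_eq_one hyv
  · rw [hw]
    linear_combination (p ^ (e - 1) * g) ^ 2 * hc + p ^ (e - 1) * g ^ 2 * c * hpe'
  · rw [hw]
    linear_combination p ^ (e - 1) * g * hd + g * d * hpe'

end

theorem ZMod.natCast_dvd_pow_sub {p : ℕ} (hp : p.Prime) {n : ℕ} (u : ZMod n) :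
    (p : ZMod n) ∣ u ^ p - u := by
  have : Fact p.Prime := ⟨hp⟩
  have hint : (p : ℤ) ∣ (u.cast : ℤ) ^ p - u.cast := by
    rw [← ZMod.intCast_zmod_eq_zero_iff_dvd]
    push_cast
    rw [ZMod.pow_card, sub_self]
  simpa [ZMod.intCast_zmod_cast] using map_dvd (Int.castRingHom (ZMod n)) hint

theorem AdjoinRoot.of_injective_of_monic {R : Type*} [CommRing R] [Nontrivial R] {f : R[X]}
    (hf : f.Monic) (hdeg : f.natDegree ≠ 0) : Function.Injective (of f) := by
  have := hf.free_adjoinRoot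
  have : Nontrivial (AdjoinRoot f) := Ideal.Quotient.nontrivial_iff.mpr <| by
    rw [Ne, Ideal.span_singleton_eq_top, hf.isUnit_iff]
    rintro rfl
    exact hdeg natDegree_one
  exact FaithfulSMul.algebraMap_injective R (AdjoinRoot f)

theorem AdjoinRoot.root_mul_sub_root {R : Type*} [CommRing R] (u : R) :
    root (X ^ 2 - C u * X + 1) *
      (of (X ^ 2 - C u * X + 1) u - root (X ^ 2 - C u * X + 1)) = 1 := by
  have h := eval₂_root (X ^ 2 - C u * X + 1)
  simp only [eval₂_add, eval₂_sub, eval₂_mul, eval₂_X_pow, eval₂_C, eval₂_X, eval₂_one] at h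
  linear_combination -h

theorem Polynomial.periodic_dickson_eval_of_injective {R S : Type*} [CommRing R] [CommRing S]
    {φ : R →+* S} (hφ : Function.Injective φ) {u : R} {y v : S} (hyv : y * v = 1)
    (hsum : y + v = φ u) {M : ℕ} (hM : Function.Periodic (fun n ↦ y ^ n + v ^ n) M) :
    Function.Periodic (fun n ↦ (dickson 1 (1 : R) n).eval u) M := by
  have key (n : ℕ) : φ ((dickson 1 (1 : R) n).eval u) = y ^ n + v ^ n := by
    rw [← eval_map_apply, map_dickson, map_one, ← hsum, dickson_one_one_eval_add_inv y v hyv]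
  intro n
  apply hφ
  simp only [key]
  exact hM n

theorem dickson_eval_congr_odd_prime_pow_general (p : ℕ) (hp : p.Prime) (hodd : Odd p)
    (e : ℕ) (he : 1 ≤ e) (k l : ℕ)
    (hkl : k ≡ l [MOD p ^ (e - 1) * ((p ^ 2 - 1) / 2)]) (u : ZMod (p ^ e)) :
    Polynomial.eval u (Polynomial.dickson 1 1 k) = Polynomial.eval u (Polynomial.dickson 1 1 l) := by
  have : Fact (1 < p ^ e) := ⟨Nat.one_lt_pow (by omega) hp.one_lt⟩
  set f : (ZMod (p ^ e))[X] := X ^ 2 - C u * X + 1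
  have hf : f.Monic := by unfold f; monicity!
  have hdeg : f.natDegree = 2 := by unfold f; compute_degree!
  set y := AdjoinRoot.root f
  set v := AdjoinRoot.of f u - y
  have hyv : y * v = 1 := AdjoinRoot.root_mul_sub_root u
  have hpe : (p : AdjoinRoot f) ^ e = 0 := by
    rw [← Nat.cast_pow, ← map_natCast (AdjoinRoot.of f), ZMod.natCast_self, map_zero]
  have hfermat : (p : AdjoinRoot f) ∣ (y + v) ^ p - (y + v) := by
    simpa [v] using map_dvd (AdjoinRoot.of f) (ZMod.natCast_dvd_pow_sub hp u)
  obtain ⟨hN₁, hN₂⟩ := hodd.sub_one_dvd_and_add_one_dvd_sq_sub_one_div_two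
  have hper := periodic_dickson_eval_of_injective
    (AdjoinRoot.of_injective_of_monic hf (by omega)) hyv (add_sub_cancel y _)
    (periodic_pow_add_pow_of_natCast_pow_eq_zero hp hodd he hpe hyv hfermat hN₁ hN₂)
  rw [← hper.map_mod_nat k, hkl, hper.map_mod_nat]

theorem dickson_eval_congr_odd_prime_pow (p : ℕ) (hp : p.Prime) (hodd : Odd p)
    (e : ℕ) (he : 1 ≤ e) (k l : ℕ) (hk : 0 < k) (hl : 0 < l)
    (hkl : k ≡ l [MOD p ^ (e - 1) * ((p ^ 2 - 1) / 2)]) (u : ZMod (p ^ e)) :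
    Polynomial.eval u (Polynomial.dickson 1 1 k) = Polynomial.eval u (Polynomial.dickson 1 1 l) :=
  dickson_eval_congr_odd_prime_pow_general p hp hodd e he k l hkl u
end

section
/- Let e ≥ 1 be an integer and let k be a positive integer with gcd(k, 4·3^{e−1}) = 1. Then D_k(u, 1) = u for all u ∈ ℤ/3^eℤ if and only if k ≡ 1 or k ≡ −1 (mod 4·3^{e−1}). -/
/-!
In `QuadraticAlgebra R (-1) u` the generator `ω` satisfies `ω² = u ω - 1`, so `u = ω + ω⁻¹` and
`D_k(u, 1) = ω^k + ω^(-k)`; hence `D_k(u, 1) = u` iff `(ω^(k-1) - 1) (ω^(k+1) - 1) = 0`.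

Over `ZMod (3^e)`, where `3` is nilpotent, write `u ≡ 0` or `u ≡ ±2 (mod 3)`. In the first (inert)
case `ω^4 = 1 + 3 s`, so `ω^(4·3^(e-1)) = 1`. In the second (ramified) case `m = ω ∓ 1` has
`m²` divisible by `3`, which forces `m (ω^(3^(e-1)) ∓ 1) = 0`. Either way
`(ω^(4·3^(e-1)) - 1)(ω² - 1) = 0`, and this gives `D_k(u, 1) = u` for `k ≡ ±1`.

Conversely, for `u = 3` the element `ω` has order exactly `4·3^(e-1)`: `ω² ≡ -1` modulo `3`
gives the factor `4`, and `ω^4 = 1 + 3 (7ω - 3)` has order `3^(e-1)` by lifting the exponent.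
For odd `k`, the factor `ω^(k∓1) - 1` whose exponent is `2 (mod 4)` is `≡ -2 (mod 3)`, hence a
unit, so the other one vanishes.
-/

open Polynomial QuadraticAlgebra

section Dickson

variable {R : Type*} [CommRing R]

theorem dickson_one_one_eval_add_inv_eq_self_iff {x y : R} (h : x * y = 1) {k : ℕ} (hk : 0 < k) :
    (dickson 1 (1 : R) k).eval (x + y) = x + y ↔ (x ^ (k - 1) - 1) * (x ^ (k + 1) - 1) = 0 := by
  obtain ⟨j, rfl⟩ : ∃ j, k = j + 1 := ⟨k - 1, by omega⟩
  have hxk : IsUnit (x ^ (j + 1)) := (IsUnit.of_mul_eq_one y h).pow _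
  have hprod : (x * y) ^ (j + 1) = 1 := by rw [h, one_pow]
  have hyx : y * x ^ (j + 1) = x ^ j := by linear_combination x ^ j * h
  rw [dickson_one_one_eval_add_inv x y h, ← sub_eq_zero, ← hxk.mul_left_eq_zero,
    Nat.add_sub_cancel]
  constructor <;> intro H
  · linear_combination H - hprod + hyx
  · linear_combination H + hprod - hyx

theorem dickson_one_one_eval_eq_self_iff (u : R) {k : ℕ} (hk : 0 < k) :
    (dickson 1 (1 : R) k).eval u = u ↔
      ((ω : QuadraticAlgebra R (-1) u) ^ (k - 1) - 1) * (ω ^ (k + 1) - 1) = 0 := by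
  have hsum : ω + star ω = algebraMap R (QuadraticAlgebra R (-1) u) u := by
    rw [← algebraMap_trace_eq_add_star, trace_omega]
  have hprod : ω * star ω = (1 : QuadraticAlgebra R (-1) u) := by
    rw [← algebraMap_norm_eq_mul_star]; simp [norm_def]
  rw [← dickson_one_one_eval_add_inv_eq_self_iff hprod hk, hsum,
    ← algebraMap_inj (a := -1) (b := u), ← aeval_algebraMap_apply_eq_algebraMap_eval, aeval_def,
    eval₂_eq_eval_map, map_dickson, map_one]

end Dickson

section ThreeAdic

variable {A : Type*} [CommRing A]

theorem one_add_three_mul_pow_three_pow (s : A) (j : ℕ) :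
    ∃ y, (1 + 3 * s) ^ 3 ^ j = 1 + 3 ^ (j + 1) * (s + 3 * y) := by
  induction j with
  | zero => exact ⟨0, by ring⟩
  | succ j ih =>
    obtain ⟨y, hy⟩ := ih
    refine ⟨y + 3 ^ j * (s + 3 * y) ^ 2 + 3 ^ (2 * j) * (s + 3 * y) ^ 3, ?_⟩
    rw [pow_succ, pow_mul, hy]
    ring

theorem add_pow_three_pow_of_sq_eq_three_mul {ε m c : A} (hε : ε ^ 2 = 1) (hm : m ^ 2 = 3 * c)
    (j : ℕ) : ∃ α β, (ε + m) ^ 3 ^ j = ε + 3 ^ j * (m * α + 3 * β) := by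
  induction j with
  | zero => exact ⟨1, 0, by ring⟩
  | succ j ih =>
    obtain ⟨α, β, hαβ⟩ := ih
    set P : A := 3 ^ j
    refine ⟨α + 6 * ε * P * α * β + P ^ 2 * c * α ^ 3 + 9 * P ^ 2 * α * β ^ 2,
      β + ε * P * c * α ^ 2 + 3 * ε * P * β ^ 2 + 3 * P ^ 2 * c * α ^ 2 * β + 3 * P ^ 2 * β ^ 3, ?_⟩
    rw [pow_succ, pow_mul, hαβ, pow_succ]
    linear_combination (3 * ε * P ^ 2 * α ^ 2 + m * P ^ 3 * α ^ 3 + 9 * P ^ 3 * α ^ 2 * β) * hm +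
      (ε + 3 * m * P * α + 9 * P * β) * hε

theorem orderOf_one_add_three_mul {s : A} {j : ℕ} (h3 : (3 : A) ^ (j + 1) = 0)
    (hs : 3 ^ j * s ≠ 0) : orderOf (1 + 3 * s) = 3 ^ j := by
  cases j with
  | zero => simp_all
  | succ i =>
    apply orderOf_eq_prime_pow
    · obtain ⟨y, hy⟩ := one_add_three_mul_pow_three_pow s i
      rw [hy]
      intro h
      exact hs (by linear_combination h - y * h3)
    · obtain ⟨y, hy⟩ := one_add_three_mul_pow_three_pow s (i + 1)
      rw [hy]
      linear_combination (s + 3 * y) * h3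

theorem pow_four_mul_three_pow_eq_one {e : ℕ} (he : 1 ≤ e) (h3 : (3 : A) ^ e = 0) {t w : A}
    (ht : t ^ 2 = 3 * w * t - 1) : t ^ (4 * 3 ^ (e - 1)) = 1 := by
  obtain ⟨y, hy⟩ := one_add_three_mul_pow_three_pow (9 * w ^ 3 * t - 3 * w ^ 2 - 2 * w * t) (e - 1)
  have ht4 : t ^ 4 = 1 + 3 * (9 * w ^ 3 * t - 3 * w ^ 2 - 2 * w * t) := by
    linear_combination (t ^ 2 + 3 * w * t + 9 * w ^ 2 - 1) * ht
  rw [pow_mul, ht4, hy, Nat.sub_add_cancel he, h3, zero_mul, add_zero]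

theorem sub_mul_pow_three_pow_sub_eq_zero {e : ℕ} (he : 1 ≤ e) (h3 : (3 : A) ^ e = 0)
    {t ε w : A} (hε : ε ^ 2 = 1) (ht : t ^ 2 = (2 * ε + 3 * w) * t - 1) :
    (t - ε) * (t ^ 3 ^ (e - 1) - ε) = 0 := by
  have hm : (t - ε) ^ 2 = 3 * (w * t) := by linear_combination ht + hε
  obtain ⟨α, β, hαβ⟩ := add_pow_three_pow_of_sq_eq_three_mul hε hm (e - 1)
  have h3' : (3 : A) ^ (e - 1) * 3 = 0 := by rw [← pow_succ, Nat.sub_add_cancel he, h3]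
  rw [add_sub_cancel] at hαβ
  rw [hαβ]
  linear_combination (3 ^ (e - 1) * α) * hm + (w * t * α + (t - ε) * β) * h3'

theorem pow_four_mul_three_pow_sub_one_mul_sq_sub_one_eq_zero {e : ℕ} (he : 1 ≤ e)
    (h3 : (3 : A) ^ e = 0) {t ε w : A} (hε : ε ^ 2 = 1) (ht : t ^ 2 = (2 * ε + 3 * w) * t - 1) :
    (t ^ (4 * 3 ^ (e - 1)) - 1) * (t ^ 2 - 1) = 0 := by
  have key := sub_mul_pow_three_pow_sub_eq_zero he h3 hε ht
  set T := t ^ 3 ^ (e - 1)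
  have hT : t ^ (4 * 3 ^ (e - 1)) = T ^ 4 := by rw [mul_comm, pow_mul]
  rw [hT]
  linear_combination (T ^ 2 + 1) * (T + ε) * (t + ε) * key +
    (T ^ 2 + 1) * (T ^ 2 + t ^ 2 - ε ^ 2 - 1) * hε

end ThreeAdic

section ZModThreePow

variable {e : ℕ}

theorem three_pow_eq_zero_of_zmod_algebra {A : Type*} [Ring A] [Algebra (ZMod (3 ^ e)) A] :
    (3 : A) ^ e = 0 := by
  have h : ((3 ^ e : ℕ) : A) = 0 := by
    rw [← map_natCast (algebraMap (ZMod (3 ^ e)) A), ZMod.natCast_self, map_zero]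
  exact_mod_cast h

theorem omega_pow_four_mul_three_pow_sub_one_mul_sq_sub_one_eq_zero (he : 1 ≤ e)
    (u : ZMod (3 ^ e)) :
    ((ω : QuadraticAlgebra (ZMod (3 ^ e)) (-1) u) ^ (4 * 3 ^ (e - 1)) - 1) * (ω ^ 2 - 1) = 0 := by
  have h3 := three_pow_eq_zero_of_zmod_algebra (e := e) (A := QuadraticAlgebra _ (-1) u)
  obtain ⟨z, rfl⟩ := ZMod.intCast_surjective u
  have hω : (ω : QuadraticAlgebra (ZMod (3 ^ e)) (-1) z) ^ 2 =
      (z : QuadraticAlgebra _ _ _) * ω - 1 := by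
    rw [sq, omega_mul_omega_eq_algebraMap, map_neg, map_one, map_intCast]; ring
  obtain ⟨w, rfl | rfl | rfl⟩ : ∃ w : ℤ, z = 3 * w ∨ z = 2 + 3 * w ∨ z = -2 + 3 * w := by
    obtain h | h | h : z % 3 = 0 ∨ z % 3 = 2 ∨ z % 3 = 1 := by omega
    exacts [⟨z / 3, by omega⟩, ⟨z / 3, by omega⟩, ⟨z / 3 + 1, by omega⟩]
  all_goals push_cast at hω
  · rw [pow_four_mul_three_pow_eq_one he h3 hω, sub_self, zero_mul]
  · exact pow_four_mul_three_pow_sub_one_mul_sq_sub_one_eq_zero he h3 (ε := 1) (by norm_num)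
      (by rw [hω]; ring)
  · exact pow_four_mul_three_pow_sub_one_mul_sq_sub_one_eq_zero he h3 (ε := -1) (by norm_num)
      (by rw [hω]; ring)

theorem dickson_one_one_eval_eq_self_of_dvd (he : 1 ≤ e) {k : ℕ} (hk : 0 < k)
    (hdvd : 4 * 3 ^ (e - 1) ∣ k - 1 ∨ 4 * 3 ^ (e - 1) ∣ k + 1) (u : ZMod (3 ^ e)) :
    (dickson 1 (1 : ZMod (3 ^ e)) k).eval u = u := by
  rw [dickson_one_one_eval_eq_self_iff u hk]
  set t : QuadraticAlgebra (ZMod (3 ^ e)) (-1) u := ω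
  have key := omega_pow_four_mul_three_pow_sub_one_mul_sq_sub_one_eq_zero he u
  have h2 : 2 ∣ 4 * 3 ^ (e - 1) := dvd_mul_of_dvd_left (by norm_num) _
  rcases hdvd with hd | hd
  · have hd2 : 2 ∣ k + 1 := by have := h2.trans hd; omega
    have := mul_dvd_mul (dvd_pow_sub_one_of_dvd (r := t) hd) (dvd_pow_sub_one_of_dvd (r := t) hd2)
    rwa [key, zero_dvd_iff] at this
  · have hd2 : 2 ∣ k - 1 := by have := h2.trans hd; omega
    have := mul_dvd_mul (dvd_pow_sub_one_of_dvd (r := t) hd2) (dvd_pow_sub_one_of_dvd (r := t) hd)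
    rwa [mul_comm (_ - 1), key, zero_dvd_iff] at this

local notation "A₃" => QuadraticAlgebra (ZMod (3 ^ e)) (-1) 3

theorem omega_sq_eq_three_mul_sub_one : (ω : A₃) ^ 2 = 3 * ω - 1 := by
  rw [sq, omega_mul_omega_eq_algebraMap, map_neg, map_one, map_ofNat]; ring

theorem isUnit_omega_pow_sub_one {M : ℕ} (hM : M % 4 = 2) : IsUnit ((ω : A₃) ^ M - 1) := by
  obtain ⟨j, rfl⟩ : ∃ j, M = 2 * (2 * j + 1) := ⟨M / 4, by omega⟩
  obtain ⟨z, hz⟩ := sub_dvd_pow_sub_pow (3 * ω - 1 : A₃) (-1) (2 * j + 1)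
  have hω : ω ^ (2 * (2 * j + 1)) - 1 = 1 + 3 * (ω * z - 1 : A₃) := by
    rw [pow_mul, omega_sq_eq_three_mul_sub_one]
    linear_combination hz + (Odd.neg_one_pow ⟨j, rfl⟩ : (-1 : A₃) ^ (2 * j + 1) = -1)
  rw [hω]
  exact IsNilpotent.isUnit_one_add
    ⟨e, by rw [mul_pow, three_pow_eq_zero_of_zmod_algebra, zero_mul]⟩

theorem orderOf_omega_pow_four (he : 1 ≤ e) : orderOf ((ω : A₃) ^ 4) = 3 ^ (e - 1) := by
  have hω4 : (ω : A₃) ^ 4 = 1 + 3 * (7 * ω - 3) := by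
    linear_combination (ω ^ 2 + 3 * ω + 8 : A₃) * omega_sq_eq_three_mul_sub_one
  rw [hω4]
  refine orderOf_one_add_three_mul
    (by rw [Nat.sub_add_cancel he]; exact three_pow_eq_zero_of_zmod_algebra) ?_
  rw [show (3 : A₃) ^ (e - 1) = algebraMap (ZMod (3 ^ e)) A₃ (3 ^ (e - 1)) by
    rw [map_pow, map_ofNat]]
  intro h
  have him : ((3 ^ (e - 1) * 7 : ℕ) : ZMod (3 ^ e)) = 0 := by
    have := congrArg QuadraticAlgebra.im h
    rw [im_mul, algebraMap_re, algebraMap_im] at this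
    simpa using this
  rw [ZMod.natCast_eq_zero_iff, ← Nat.sub_add_cancel he, pow_succ, Nat.add_sub_cancel] at him
  exact absurd (Nat.dvd_of_mul_dvd_mul_left (by positivity) him) (by norm_num)

theorem orderOf_omega (he : 1 ≤ e) : orderOf (ω : A₃) = 4 * 3 ^ (e - 1) := by
  have : Fact (1 < 3 ^ e) := ⟨Nat.one_lt_pow (by omega) (by norm_num)⟩
  have h4 := orderOf_omega_pow_four he
  have h2 : orderOf ((ω : A₃) ^ 3 ^ (e - 1)) = 4 := by
    obtain ⟨r, hr⟩ : Odd (3 ^ (e - 1)) := Odd.pow (by decide)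
    rw [show 4 = 2 ^ (1 + 1) by norm_num]
    apply orderOf_eq_prime_pow
    · rw [← pow_mul]
      exact fun h => (isUnit_omega_pow_sub_one (by omega)).ne_zero (sub_eq_zero.mpr h)
    · convert h4 ▸ pow_orderOf_eq_one ((ω : A₃) ^ 4) using 1
      ring
  refine Nat.dvd_antisymm (orderOf_dvd_of_pow_eq_one ?_) ?_
  · rw [pow_mul, ← h4, pow_orderOf_eq_one]
  · exact (Nat.Coprime.pow_right _ (by norm_num)).mul_dvd_of_dvd_of_dvd
      (h2 ▸ orderOf_pow_dvd _) (h4 ▸ orderOf_pow_dvd _)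

theorem dvd_sub_one_or_dvd_add_one_of_dickson_eval_three (he : 1 ≤ e) {k : ℕ} (hk : Odd k)
    (h : (dickson 1 (1 : ZMod (3 ^ e)) k).eval 3 = 3) :
    4 * 3 ^ (e - 1) ∣ k - 1 ∨ 4 * 3 ^ (e - 1) ∣ k + 1 := by
  rw [dickson_one_one_eval_eq_self_iff _ hk.pos] at h
  rw [← orderOf_omega he]
  obtain ⟨r, rfl⟩ := hk
  obtain hr | hr : r % 2 = 0 ∨ r % 2 = 1 := by omega
  · left
    refine orderOf_dvd_of_pow_eq_one (sub_eq_zero.mp ?_)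
    exact ((isUnit_omega_pow_sub_one (by omega)).mul_left_eq_zero).mp h
  · right
    refine orderOf_dvd_of_pow_eq_one (sub_eq_zero.mp ?_)
    exact ((isUnit_omega_pow_sub_one (by omega)).mul_right_eq_zero).mp h

end ZModThreePow

theorem Int.natCast_modEq_one_or_neg_one_iff {n k : ℕ} (hk : 1 ≤ k) :
    ((k : ℤ) ≡ 1 [ZMOD n] ∨ (k : ℤ) ≡ -1 [ZMOD n]) ↔ n ∣ k - 1 ∨ n ∣ k + 1 := by
  rw [Int.modEq_comm, Int.modEq_iff_dvd, Int.modEq_comm, Int.modEq_iff_dvd, sub_neg_eq_add,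
    ← Int.natCast_dvd_natCast, ← Int.natCast_dvd_natCast, Nat.cast_sub hk, Nat.cast_add,
    Nat.cast_one]

theorem dickson_identity_iff_three_pow_general (e : ℕ) (he : 1 ≤ e) (k : ℕ)
    (hgcd : Nat.gcd k (4 * 3 ^ (e - 1)) = 1) :
    (∀ u : ZMod (3 ^ e), Polynomial.eval u (Polynomial.dickson 1 1 k) = u) ↔
      ((k : ℤ) ≡ 1 [ZMOD (4 * 3 ^ (e - 1) : ℕ)] ∨ (k : ℤ) ≡ -1 [ZMOD (4 * 3 ^ (e - 1) : ℕ)]) := by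
  have hodd : Odd k :=
    (Nat.Coprime.coprime_dvd_right (dvd_mul_of_dvd_left (by norm_num) _) hgcd).odd_of_right
  rw [Int.natCast_modEq_one_or_neg_one_iff hodd.pos]
  exact ⟨fun h => dvd_sub_one_or_dvd_add_one_of_dickson_eval_three he hodd (h 3),
    fun h u => dickson_one_one_eval_eq_self_of_dvd he hodd.pos h u⟩

theorem dickson_identity_iff_three_pow (e : ℕ) (he : 1 ≤ e) (k : ℕ) (hk : 0 < k)
    (hgcd : Nat.gcd k (4 * 3 ^ (e - 1)) = 1) :
    (∀ u : ZMod (3 ^ e), Polynomial.eval u (Polynomial.dickson 1 1 k) = u) ↔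
      ((k : ℤ) ≡ 1 [ZMOD (4 * 3 ^ (e - 1) : ℕ)] ∨ (k : ℤ) ≡ -1 [ZMOD (4 * 3 ^ (e - 1) : ℕ)]) :=
  dickson_identity_iff_three_pow_general e he k hgcd
end

section
/- Let n = 2^e · p_1^{e_1} ⋯ p_r^{e_r} with e ≥ 1 and p_1 < ⋯ < p_r distinct odd primes, and let k be a positive integer with gcd(k, w(n)) = 1. Then D_k(u, 1) = u for all u ∈ ℤ/nℤ if and only if there exists a positive integer a_0 with gcd(a_0, l_0) = 1 such that D_{a_0}(u, 1) = u for all u ∈ ℤ/2^eℤ and k ≡ a_0 (mod l_0), and for each i = 1, …, r there exists a positive integer a_i with gcd(a_i, l_i) = 1 such that D_{a_i}(u, 1) = u for all u ∈ ℤ/p_i^{e_i}ℤ and k ≡ a_i (mod l_i). -/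
/-!
Adjoin to `ℤ/q` a root `x` of `X² - uX + 1`; then `x` is a unit, `u = x + x⁻¹` and
`D_k(u, 1) = x ^ k + x⁻¹ ^ k`, so `D_k(u, 1) = D_a(u, 1)` as soon as
`(x ^ (k - a) - 1) (x ^ (k + a) - 1) = 0`.

For `q = p ^ t` with `p` odd, Frobenius (`D_p(u, 1) ≡ u ^ p ≡ u`) gives
`p ∣ (x ^ (p - 1) - 1) (x ^ (p + 1) - 1)`, hence `p ∣ (x ^ ((p² - 1) / 2) - 1) (x² - 1)`, and
raising to the `p`-th power gains one factor `p` at a time, so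
`(x ^ (p ^ (t - 1) (p² - 1) / 2) - 1) (x² - 1) = 0`. For `q = 2 ^ e` the identities
`(x ^ 12 - 1) (x² - 1) = u (u² - 1) (u² - 3) (u² - 4) x ^ 7` and their relatives play the same role.
Thus on each `ℤ/p_i ^ e_i` the map `D_k(·, 1)` only depends on `k mod l_i`, and the Chinese
remainder theorem glues the local identities.
-/

open Polynomial

theorem map_eval_dickson_one_one {S T : Type*} [CommRing S] [CommRing T] (φ : S →+* T)
    (u : S) (k : ℕ) : φ ((dickson 1 1 k).eval u) = (dickson 1 1 k).eval (φ u) := by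
  rw [← eval₂_at_apply, eval₂_eq_eval_map, map_dickson, map_one]

def DicksonFixes (k : ℕ) (S : Type*) [CommRing S] : Prop :=
  ∀ u : S, (dickson 1 1 k).eval u = u

namespace DicksonFixes

variable {k : ℕ} {S T : Type*} [CommRing S] [CommRing T]

theorem of_surjective (φ : S →+* T) (hφ : Function.Surjective φ) (h : DicksonFixes k S) :
    DicksonFixes k T := by
  intro v
  obtain ⟨u, rfl⟩ := hφ v
  rw [← map_eval_dickson_one_one, h]

theorem of_injective (φ : S →+* T) (hφ : Function.Injective φ) (h : DicksonFixes k T) :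
    DicksonFixes k S :=
  fun u => hφ <| by rw [map_eval_dickson_one_one, h]

theorem prod (hS : DicksonFixes k S) (hT : DicksonFixes k T) : DicksonFixes k (S × T) :=
  fun u => Prod.ext ((map_eval_dickson_one_one (RingHom.fst S T) u k).trans (hS _))
    ((map_eval_dickson_one_one (RingHom.snd S T) u k).trans (hT _))

theorem pi {ι : Type*} {T : ι → Type*} [∀ i, CommRing (T i)] (h : ∀ i, DicksonFixes k (T i)) :
    DicksonFixes k (∀ i, T i) :=
  fun u => funext fun i => (map_eval_dickson_one_one (Pi.evalRingHom T i) u k).trans (h i _)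

end DicksonFixes

theorem ZMod.natCast_dvd_of_castHom_eq_zero {d n : ℕ} [NeZero n] (h : d ∣ n) {z : ZMod n}
    (hz : ZMod.castHom h (ZMod d) z = 0) : (d : ZMod n) ∣ z := by
  rw [← ZMod.natCast_zmod_val z, map_natCast, ZMod.natCast_eq_zero_iff] at hz
  rw [← ZMod.natCast_zmod_val z]
  exact Nat.cast_dvd_cast hz

theorem prime_dvd_eval_dickson_sub {p t : ℕ} [Fact p.Prime] (ht : 1 ≤ t) (u : ZMod (p ^ t)) :
    (p : ZMod (p ^ t)) ∣ (dickson 1 1 p).eval u - u := by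
  have : NeZero (p ^ t) := ⟨pow_ne_zero _ (Fact.out : p.Prime).ne_zero⟩
  refine ZMod.natCast_dvd_of_castHom_eq_zero (dvd_pow_self p (by omega)) ?_
  rw [map_sub, map_eval_dickson_one_one, dickson_one_one_charP, eval_pow, eval_X,
    ZMod.pow_card, sub_self]

section CommRing

variable {R : Type*} [CommRing R]

theorem sub_one_mul_prime_dvd_pow_prime_sub_one {p : ℕ} (hp : p.Prime) {z : R}
    (h : (p : R) ∣ (z - 1) ^ (p - 1)) : (z - 1) * p ∣ z ^ p - 1 := by
  obtain ⟨r, hr⟩ := exists_add_pow_prime_eq hp (z - 1) 1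
  obtain ⟨w, hw⟩ := h
  have hzp : (z - 1) ^ p = (z - 1) * (z - 1) ^ (p - 1) := by
    rw [← pow_succ', Nat.sub_add_cancel hp.one_lt.le]
  rw [sub_add_cancel, one_pow] at hr
  exact ⟨w + r, by linear_combination hr + hzp + (z - 1) * hw⟩

theorem sub_one_mul_prime_pow_dvd_pow_prime_pow_sub_one {p : ℕ} (hp : p.Prime) {y : R}
    (h : (p : R) ∣ (y - 1) ^ (p - 1)) (s : ℕ) : (y - 1) * (p : R) ^ s ∣ y ^ p ^ s - 1 := by
  induction s with
  | zero => simp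
  | succ s ih =>
    have hz : (p : R) ∣ (y ^ p ^ s - 1) ^ (p - 1) :=
      h.trans (pow_dvd_pow_of_dvd ((dvd_mul_right _ _).trans ih) _)
    calc (y - 1) * (p : R) ^ (s + 1) = (y - 1) * p ^ s * p := by ring
      _ ∣ (y ^ p ^ s - 1) * p := mul_dvd_mul_right ih _
      _ ∣ (y ^ p ^ s) ^ p - 1 := sub_one_mul_prime_dvd_pow_prime_sub_one hp hz
      _ = y ^ p ^ (s + 1) - 1 := by rw [← pow_mul, pow_succ]

theorem pow_sub_one_mul_pow_add_two_sub_one {x y : R} (hxy : x * y = 1) (n : ℕ) :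
    (x ^ n - 1) * (x ^ (n + 2) - 1) = x ^ (n + 1) * (x ^ (n + 1) + y ^ (n + 1) - (x + y)) := by
  have hn : x ^ (n + 1) * y ^ (n + 1) = 1 := by rw [← mul_pow, hxy, one_pow]
  linear_combination (-1) * hn + x ^ n * hxy

/-- `x ^ 2 - 1` is a combination of `x ^ (2c) - 1` and `x ^ (2c + 2) - 1`, because
`gcd (2c, 2c + 2) = 2`. -/
theorem pow_sub_one_mul_pow_sub_one_dvd_mul_sq_sub_one (x : R) (c : ℕ) :
    (x ^ (2 * c) - 1) * (x ^ (2 * c + 2) - 1) ∣ (x ^ (c * (2 * c + 2)) - 1) * (x ^ 2 - 1) := by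
  cases c with
  | zero => simp
  | succ m =>
    have hB : (x ^ ((m + 1) * (2 * (m + 1) + 2)) - 1) * (x ^ 2 - 1)
        = (x ^ ((m + 1) * (2 * (m + 1) + 2)) - 1) * (x ^ (2 * (m + 1) * (m + 1)) - 1)
          - x ^ 2 * ((x ^ ((2 * (m + 1) + 2) * m) - 1)
            * (x ^ ((m + 1) * (2 * (m + 1) + 2)) - 1)) := by
      ring
    rw [hB, mul_comm (x ^ (2 * (m + 1)) - 1)]
    exact dvd_sub
      (mul_dvd_mul (dvd_pow_sub_one_of_dvd ⟨m + 1, by ring⟩) (dvd_pow_sub_one_of_dvd ⟨_, rfl⟩))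
      (dvd_mul_of_dvd_right
        (mul_dvd_mul (dvd_pow_sub_one_of_dvd ⟨_, rfl⟩) (dvd_pow_sub_one_of_dvd ⟨m + 2, by ring⟩)) _)

theorem pow_sub_one_mul_pow_sub_one_dvd_sq (x : R) (c : ℕ) :
    (x ^ (2 * c) - 1) * (x ^ (2 * c + 2) - 1) ∣ (x ^ (c * (2 * c + 2)) - 1) ^ 2 :=
  sq (x ^ (c * (2 * c + 2)) - 1) ▸
    mul_dvd_mul (dvd_pow_sub_one_of_dvd ⟨c + 1, by ring⟩) (dvd_pow_sub_one_of_dvd ⟨c, by ring⟩)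

variable {u x : R}

theorem pow_three_sub_one_mul_sub_one (hx : x ^ 2 + 1 = u * x) :
    (x ^ 3 - 1) * (x - 1) = (u + 1) * (u - 2) * x ^ 2 :=
  calc _ = ((x ^ 2 + 1) - 2 * x) * ((x ^ 2 + 1) + x) := by ring
    _ = _ := by rw [hx]; ring

theorem pow_six_sub_one_eq_mul_sq (hx : x ^ 2 + 1 = u * x) :
    x ^ 6 - 1 = (u * (u ^ 2 - 1) * x - 2 * (u ^ 2 - 1)) * x ^ 2 :=
  calc _ = ((x ^ 2 + 1) - 2) * ((x ^ 2 + 1) ^ 2 - x ^ 2) := by ring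
    _ = _ := by rw [hx]; ring

theorem pow_six_sub_one_mul_sq_sub_one (hx : x ^ 2 + 1 = u * x) :
    (x ^ 6 - 1) * (x ^ 2 - 1) = (u ^ 2 - 1) * (u ^ 2 - 4) * x ^ 4 :=
  calc _ = ((x ^ 2 + 1) ^ 2 - 4 * x ^ 2) * ((x ^ 2 + 1) ^ 2 - x ^ 2) := by ring
    _ = _ := by rw [hx]; ring

theorem pow_six_sub_one_mul_pow_four_sub_one (hx : x ^ 2 + 1 = u * x) :
    (x ^ 6 - 1) * (x ^ 4 - 1) = u * (u ^ 2 - 1) * (u ^ 2 - 4) * x ^ 5 :=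
  calc _ = ((x ^ 2 + 1) ^ 2 - 4 * x ^ 2) * ((x ^ 2 + 1) ^ 2 - x ^ 2) * (x ^ 2 + 1) := by ring
    _ = _ := by rw [hx]; ring

theorem pow_twelve_sub_one_mul_sq_sub_one (hx : x ^ 2 + 1 = u * x) :
    (x ^ 12 - 1) * (x ^ 2 - 1) = u * (u ^ 2 - 1) * (u ^ 2 - 3) * (u ^ 2 - 4) * x ^ 7 :=
  calc _ = ((x ^ 2 + 1) ^ 2 - 4 * x ^ 2) * ((x ^ 2 + 1) ^ 2 - x ^ 2) * (x ^ 2 + 1)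
        * ((x ^ 2 + 1) ^ 2 - 3 * x ^ 2) := by ring
    _ = _ := by rw [hx]; ring

end CommRing

section NormOneQuadratic

variable {A : Type*} [CommRing A]

noncomputable def normOneQuadratic (u : A) : A[X] := X ^ 2 - C u * X + 1

theorem monic_normOneQuadratic (u : A) : (normOneQuadratic u).Monic := by
  unfold normOneQuadratic
  rw [sub_eq_add_neg, add_assoc, ← neg_mul, ← C_neg]
  exact monic_X_pow_add (degree_linear_le.trans_lt (by norm_num))

theorem natDegree_normOneQuadratic [Nontrivial A] (u : A) :
    (normOneQuadratic u).natDegree = 2 := by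
  unfold normOneQuadratic
  compute_degree!

namespace AdjoinRoot

theorem root_sq_add_one (u : A) :
    root (normOneQuadratic u) ^ 2 + 1 = of (normOneQuadratic u) u * root (normOneQuadratic u) := by
  have h : mk (normOneQuadratic u) (X ^ 2 - C u * X + 1) = 0 := mk_self
  rw [map_add, map_sub, map_mul, map_pow, mk_X, mk_C, map_one] at h
  linear_combination h

theorem root_mul_sub_root_s17 (u : A) :
    root (normOneQuadratic u) * (of (normOneQuadratic u) u - root (normOneQuadratic u)) = 1 := by
  linear_combination (root_sq_add_one u).symm

theorem of_normOneQuadratic_injective (u : A) : Function.Injective (of (normOneQuadratic u)) := by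
  cases subsingleton_or_nontrivial A
  · exact Function.injective_of_subsingleton _
  refine (injective_iff_map_eq_zero _).mpr fun a ha => by_contra fun hne => ?_
  refine mk_ne_zero_of_natDegree_lt (monic_normOneQuadratic u) (C_ne_zero.mpr hne) ?_ ha
  rw [natDegree_C, natDegree_normOneQuadratic]
  norm_num

theorem natCast_eq_zero {n : ℕ} (u : ZMod n) : (n : AdjoinRoot (normOneQuadratic u)) = 0 := by
  rw [← map_natCast (of _), ZMod.natCast_self, map_zero]

theorem of_eval_dickson (u : A) (k : ℕ) :
    of (normOneQuadratic u) ((dickson 1 1 k).eval u)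
      = root (normOneQuadratic u) ^ k
        + (of (normOneQuadratic u) u - root (normOneQuadratic u)) ^ k := by
  rw [map_eval_dickson_one_one, ← dickson_one_one_eval_add_inv _ _ (root_mul_sub_root_s17 u),
    add_sub_cancel]

/-- Since `x ^ k + x⁻¹ ^ k - x ^ a - x⁻¹ ^ a = x⁻¹ ^ k (x ^ (k - a) - 1) (x ^ (k + a) - 1)`. -/
theorem eval_dickson_eq_of_pow_sub_one_mul_eq_zero (u : A) {c d k a : ℕ}
    (h : (root (normOneQuadratic u) ^ c - 1) * (root (normOneQuadratic u) ^ d - 1) = 0)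
    (hc : k ≡ a [MOD c]) (hd : d ∣ k + a) :
    (dickson 1 1 k).eval u = (dickson 1 1 a).eval u := by
  wlog hak : a ≤ k generalizing k a
  · exact (this hc.symm (add_comm k a ▸ hd) (le_of_not_ge hak)).symm
  obtain ⟨j, rfl⟩ := Nat.exists_eq_add_of_le hak
  apply of_normOneQuadratic_injective u
  rw [of_eval_dickson, of_eval_dickson]
  set x := root (normOneQuadratic u)
  set y := of (normOneQuadratic u) u - x
  have hxy : x * y = 1 := root_mul_sub_root_s17 u
  have hcj : c ∣ j := by simpa using (Nat.modEq_iff_dvd' hak).mp hc.symm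
  have h0 : (x ^ j - 1) * (x ^ (a + j + a) - 1) = 0 :=
    zero_dvd_iff.mp (h ▸ mul_dvd_mul (dvd_pow_sub_one_of_dvd hcj) (dvd_pow_sub_one_of_dvd hd))
  have ha : x ^ a * y ^ a = 1 := by rw [← mul_pow, hxy, one_pow]
  have hj : x ^ j * y ^ j = 1 := by rw [← mul_pow, hxy, one_pow]
  simp only [pow_add] at h0 ⊢
  linear_combination (y ^ a * y ^ j) * h0 + (x ^ a - x ^ a * x ^ j) * (x ^ j * y ^ j) * ha
    + (x ^ a - x ^ a * x ^ j + y ^ a) * hj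

/-- Frobenius: `x ^ p + x⁻¹ ^ p = D_p(u, 1) ≡ u ^ p ≡ u = x + x⁻¹` modulo `p`. -/
theorem prime_dvd_pow_pred_sub_one_mul_pow_succ_sub_one {p t : ℕ} [Fact p.Prime] (ht : 1 ≤ t)
    (u : ZMod (p ^ t)) :
    (p : AdjoinRoot (normOneQuadratic u)) ∣
      (root (normOneQuadratic u) ^ (p - 1) - 1) * (root (normOneQuadratic u) ^ (p + 1) - 1) := by
  obtain ⟨n, rfl⟩ : ∃ n, p = n + 1 := ⟨p - 1, by have := (Fact.out : p.Prime).pos; omega⟩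
  have h := map_dvd (of (normOneQuadratic u)) (prime_dvd_eval_dickson_sub ht u)
  rw [map_natCast, map_sub, of_eval_dickson] at h
  rw [Nat.add_sub_cancel, pow_sub_one_mul_pow_add_two_sub_one (root_mul_sub_root_s17 u),
    add_sub_cancel]
  exact h.mul_left _

theorem root_pow_sub_one_mul_sq_sub_one_eq_zero_of_odd_prime {c s : ℕ} (hp : (2 * c + 1).Prime)
    (u : ZMod ((2 * c + 1) ^ (s + 1))) :
    (root (normOneQuadratic u) ^ ((2 * c + 1) ^ s * (c * (2 * c + 2))) - 1)
      * (root (normOneQuadratic u) ^ 2 - 1) = 0 := by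
  have : Fact (2 * c + 1).Prime := ⟨hp⟩
  set x := root (normOneQuadratic u)
  set P := ((2 * c + 1 : ℕ) : AdjoinRoot (normOneQuadratic u))
  have hG : P ∣ (x ^ (2 * c) - 1) * (x ^ (2 * c + 2) - 1) :=
    prime_dvd_pow_pred_sub_one_mul_pow_succ_sub_one (Nat.le_add_left 1 s) u
  have hA : P ∣ (x ^ (c * (2 * c + 2)) - 1) ^ (2 * c + 1 - 1) := by
    have := hp.two_le
    exact hG.trans ((pow_sub_one_mul_pow_sub_one_dvd_sq x c).trans (pow_dvd_pow _ (by omega)))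
  have hAB := hG.trans (pow_sub_one_mul_pow_sub_one_dvd_mul_sq_sub_one x c)
  have hlift := sub_one_mul_prime_pow_dvd_pow_prime_pow_sub_one hp hA s
  have : P ^ (s + 1) ∣ (x ^ ((2 * c + 1) ^ s * (c * (2 * c + 2))) - 1) * (x ^ 2 - 1) :=
    calc P ^ (s + 1) = P * P ^ s := pow_succ' _ _
      _ ∣ (x ^ (c * (2 * c + 2)) - 1) * (x ^ 2 - 1) * P ^ s := mul_dvd_mul_right hAB _
      _ = (x ^ (c * (2 * c + 2)) - 1) * P ^ s * (x ^ 2 - 1) := by ring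
      _ ∣ ((x ^ (c * (2 * c + 2))) ^ (2 * c + 1) ^ s - 1) * (x ^ 2 - 1) :=
          mul_dvd_mul_right hlift _
      _ = _ := by rw [← pow_mul, mul_comm (c * (2 * c + 2))]
  rwa [← Nat.cast_pow, natCast_eq_zero, zero_dvd_iff] at this

theorem root_pow_sub_one_mul_sq_sub_one_eq_zero_of_two_pow {e : ℕ} (u : ZMod (2 ^ (e + 4))) :
    (root (normOneQuadratic u) ^ (12 * 2 ^ e) - 1) * (root (normOneQuadratic u) ^ 2 - 1) = 0 := by
  set x := root (normOneQuadratic u)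
  set ι := of (normOneQuadratic u)
  have hx : x ^ 2 + 1 = ι u * x := root_sq_add_one u
  have h16 : (16 : ZMod (2 ^ (e + 4))) ∣ u * (u ^ 2 - 1) * (u ^ 2 - 3) * (u ^ 2 - 4) := by
    have hu : ∀ v : ZMod 16, v * (v ^ 2 - 1) * (v ^ 2 - 3) * (v ^ 2 - 4) = 0 := by decide
    exact_mod_cast ZMod.natCast_dvd_of_castHom_eq_zero (d := 16) ⟨2 ^ e, by ring⟩
      (by simp only [map_mul, map_sub, map_pow, map_one, map_ofNat]; exact hu _)
  have h2 : (2 : ZMod (2 ^ (e + 4))) ∣ u * (u ^ 2 - 1) := by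
    have hu : ∀ v : ZMod 2, v * (v ^ 2 - 1) = 0 := by decide
    exact_mod_cast ZMod.natCast_dvd_of_castHom_eq_zero (d := 2) ⟨2 ^ (e + 3), by ring⟩
      (by simp only [map_mul, map_sub, map_pow, map_one]; exact hu _)
  have hAB : (16 : AdjoinRoot (normOneQuadratic u)) ∣ (x ^ 12 - 1) * (x ^ 2 - 1) := by
    have := map_dvd ι h16
    simp only [map_mul, map_sub, map_pow, map_one, map_ofNat] at this
    rw [pow_twelve_sub_one_mul_sq_sub_one hx]
    exact this.mul_right _
  have hA : ((2 : ℕ) : AdjoinRoot (normOneQuadratic u)) ∣ (x ^ 12 - 1) ^ (2 - 1) := by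
    have := map_dvd ι h2
    simp only [map_mul, map_sub, map_pow, map_one, map_ofNat] at this
    have h6 : (2 : AdjoinRoot (normOneQuadratic u)) ∣ x ^ 6 - 1 := by
      rw [pow_six_sub_one_eq_mul_sq hx]
      exact (dvd_sub (this.mul_right x) (dvd_mul_right 2 _)).mul_right _
    rw [Nat.cast_ofNat, pow_one]
    exact h6.trans (dvd_pow_sub_one_of_dvd (by norm_num))
  have hlift := sub_one_mul_prime_pow_dvd_pow_prime_pow_sub_one Nat.prime_two hA e
  have : ((2 ^ (e + 4) : ℕ) : AdjoinRoot (normOneQuadratic u)) ∣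
      (x ^ (12 * 2 ^ e) - 1) * (x ^ 2 - 1) :=
    calc ((2 ^ (e + 4) : ℕ) : AdjoinRoot (normOneQuadratic u)) = 16 * ((2 : ℕ) : _) ^ e := by
          push_cast; ring
      _ ∣ (x ^ 12 - 1) * (x ^ 2 - 1) * ((2 : ℕ) : _) ^ e := mul_dvd_mul_right hAB _
      _ = (x ^ 12 - 1) * ((2 : ℕ) : _) ^ e * (x ^ 2 - 1) := by ring
      _ ∣ ((x ^ 12) ^ 2 ^ e - 1) * (x ^ 2 - 1) := mul_dvd_mul_right hlift _
      _ = _ := by rw [← pow_mul]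
  rwa [natCast_eq_zero, zero_dvd_iff] at this

end AdjoinRoot

end NormOneQuadratic

theorem eval_dickson_eq_of_modEq_odd_prime_pow {p t k a : ℕ} (hp : p.Prime) (hp2 : p ≠ 2)
    (u : ZMod (p ^ t)) (h : k ≡ a [MOD p ^ (t - 1) * ((p ^ 2 - 1) / 2)]) :
    (dickson 1 1 k).eval u = (dickson 1 1 a).eval u := by
  obtain _ | s := t
  · exact Subsingleton.elim (α := ZMod 1) _ _
  obtain ⟨c, rfl⟩ := hp.eq_two_or_odd'.resolve_left hp2
  have hL : ((2 * c + 1) ^ 2 - 1) / 2 = c * (2 * c + 2) := by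
    rw [show (2 * c + 1) ^ 2 = 2 * (c * (2 * c + 2)) + 1 by ring, Nat.add_sub_cancel,
      Nat.mul_div_cancel_left _ two_pos]
  rw [Nat.add_sub_cancel, hL] at h
  have h2 : k ≡ a [MOD 2] := h.of_dvd (Dvd.dvd.mul_left ⟨c * (c + 1), by ring⟩ _)
  unfold Nat.ModEq at h2
  exact AdjoinRoot.eval_dickson_eq_of_pow_sub_one_mul_eq_zero u
    (AdjoinRoot.root_pow_sub_one_mul_sq_sub_one_eq_zero_of_odd_prime hp u) h (by omega)

theorem eval_dickson_eq_of_modEq_two_pow {e k a : ℕ} (u : ZMod (2 ^ e))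
    (ha : a.Coprime (if e < 3 then 3 * 2 ^ (e - 1) else 3 * 2 ^ (e - 2)))
    (h : k ≡ a [MOD if e < 3 then 3 * 2 ^ (e - 1) else 3 * 2 ^ (e - 2)]) :
    (dickson 1 1 k).eval u = (dickson 1 1 a).eval u := by
  set x := AdjoinRoot.root (normOneQuadratic u)
  set ι := AdjoinRoot.of (normOneQuadratic u)
  have hx : x ^ 2 + 1 = ι u * x := AdjoinRoot.root_sq_add_one u
  rcases (by omega : e = 0 ∨ e = 1 ∨ e = 2 ∨ e = 3 ∨ 4 ≤ e) with rfl | rfl | rfl | rfl | he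
  · exact Subsingleton.elim (α := ZMod 1) _ _
  · norm_num at h
    refine AdjoinRoot.eval_dickson_eq_of_pow_sub_one_mul_eq_zero u (d := 1) ?_ h (one_dvd _)
    have hu : ∀ v : ZMod (2 ^ 1), (v + 1) * (v - 2) = 0 := by decide
    have := congrArg ι (hu u)
    simp only [map_mul, map_add, map_sub, map_one, map_ofNat, map_zero] at this
    rw [pow_one x, pow_three_sub_one_mul_sub_one hx]
    linear_combination x ^ 2 * this
  · norm_num at h
    refine AdjoinRoot.eval_dickson_eq_of_pow_sub_one_mul_eq_zero u (d := 2) ?_ h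
      (by unfold Nat.ModEq at h; omega)
    have hu : ∀ v : ZMod (2 ^ 2), (v ^ 2 - 1) * (v ^ 2 - 4) = 0 := by decide
    have := congrArg ι (hu u)
    simp only [map_mul, map_pow, map_sub, map_one, map_ofNat, map_zero] at this
    rw [pow_six_sub_one_mul_sq_sub_one hx]
    linear_combination x ^ 4 * this
  · norm_num at h ha
    have ha2 : a % 2 = 1 :=
      Nat.odd_iff.mp (Nat.coprime_two_right.mp (ha.coprime_dvd_right (by norm_num)))
    unfold Nat.ModEq at h
    have hu : ∀ v : ZMod (2 ^ 3), v * (v ^ 2 - 1) * (v ^ 2 - 4) = 0 := by decide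
    have := congrArg ι (hu u)
    simp only [map_mul, map_pow, map_sub, map_one, map_ofNat, map_zero] at this
    -- as `a` is odd, `12 ∤ k - a` forces `4 ∣ k + a`
    rcases (by omega : k % 12 = a % 12 ∨ 4 ∣ k + a) with h12 | h4
    · refine AdjoinRoot.eval_dickson_eq_of_pow_sub_one_mul_eq_zero u (d := 2) ?_ h12 (by omega)
      rw [pow_twelve_sub_one_mul_sq_sub_one hx]
      linear_combination (ι u ^ 2 - 3) * x ^ 7 * this
    · refine AdjoinRoot.eval_dickson_eq_of_pow_sub_one_mul_eq_zero u ?_ h h4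
      rw [pow_six_sub_one_mul_pow_four_sub_one hx]
      linear_combination x ^ 5 * this
  · obtain ⟨e, rfl⟩ : ∃ e', e = e' + 4 := ⟨e - 4, by omega⟩
    have hl : (if e + 4 < 3 then 3 * 2 ^ (e + 4 - 1) else 3 * 2 ^ (e + 4 - 2)) = 12 * 2 ^ e := by
      rw [if_neg (by omega), show e + 4 - 2 = e + 2 by omega, pow_add]
      ring
    rw [hl] at h
    have h2 : k ≡ a [MOD 2] := h.of_dvd (Dvd.dvd.mul_right (by norm_num) _)
    unfold Nat.ModEq at h2
    exact AdjoinRoot.eval_dickson_eq_of_pow_sub_one_mul_eq_zero u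
      (AdjoinRoot.root_pow_sub_one_mul_sq_sub_one_eq_zero_of_two_pow u) h (by omega)


theorem dickson_identity_iff_local_even_general
    (e r : ℕ) (p ee : Fin r → ℕ)
    (hp : ∀ i, Nat.Prime (p i)) (hodd : ∀ i, Odd (p i)) (hmono : StrictMono p)
    (n : ℕ) (hn : n = 2 ^ e * ∏ i, p i ^ ee i)
    (l : Fin r → ℕ) (hl : ∀ i, l i = p i ^ (ee i - 1) * ((p i ^ 2 - 1) / 2))
    (l0 : ℕ) (hl0 : l0 = if e < 3 then 3 * 2 ^ (e - 1) else 3 * 2 ^ (e - 2))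
    (w : ℕ) (hw : w = Nat.lcm l0 (Finset.univ.lcm l))
    (k : ℕ) (hk : 0 < k) (hgcd : Nat.gcd k w = 1) :
    (∀ u : ZMod n, Polynomial.eval u (Polynomial.dickson 1 1 k) = u) ↔
      ((∃ a0 : ℕ, 0 < a0 ∧ Nat.gcd a0 l0 = 1 ∧
          (∀ u : ZMod (2 ^ e), Polynomial.eval u (Polynomial.dickson 1 1 a0) = u) ∧
          k ≡ a0 [MOD l0]) ∧
        ∀ i, ∃ a : ℕ, 0 < a ∧ Nat.gcd a (l i) = 1 ∧
          (∀ u : ZMod (p i ^ ee i), Polynomial.eval u (Polynomial.dickson 1 1 a) = u) ∧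
          k ≡ a [MOD l i]) := by
  have hp2 : ∀ i, p i ≠ 2 := fun i => (hodd i).ne_two_of_dvd_nat dvd_rfl
  have hdvd : ∀ i, p i ^ ee i ∣ n := fun i =>
    hn ▸ (Finset.dvd_prod_of_mem _ (Finset.mem_univ i)).mul_left _
  have hlw : ∀ i, l i ∣ w := fun i =>
    hw ▸ (Finset.dvd_lcm (Finset.mem_univ i)).trans (Nat.dvd_lcm_right _ _)
  constructor
  · intro hid
    have hloc : ∀ q, q ∣ n → DicksonFixes k (ZMod q) := fun q hq =>
      DicksonFixes.of_surjective (ZMod.castHom hq _) (ZMod.castHom_surjective hq) hid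
    exact ⟨⟨k, hk, Nat.Coprime.coprime_dvd_right (hw ▸ Nat.dvd_lcm_left _ _) hgcd,
        hloc _ ⟨_, hn⟩, rfl⟩,
      fun i => ⟨k, hk, Nat.Coprime.coprime_dvd_right (hlw i) hgcd, hloc _ (hdvd i), rfl⟩⟩
  · rintro ⟨⟨a0, -, hg0, hid0, hm0⟩, hloc⟩
    have h2 : DicksonFixes k (ZMod (2 ^ e)) := fun u =>
      (eval_dickson_eq_of_modEq_two_pow u (hl0 ▸ hg0) (hl0 ▸ hm0)).trans (hid0 u)
    have hpe : ∀ i, DicksonFixes k (ZMod (p i ^ ee i)) := fun i u => by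
      obtain ⟨a, -, -, hida, hma⟩ := hloc i
      exact (eval_dickson_eq_of_modEq_odd_prime_pow (hp i) (hp2 i) u (hl i ▸ hma)).trans (hida u)
    have hpair : Pairwise fun i j => Nat.Coprime (p i ^ ee i) (p j ^ ee j) := fun i j hij =>
      ((Nat.coprime_primes (hp i) (hp j)).mpr (hmono.injective.ne hij)).pow _ _
    have hcop : Nat.Coprime (2 ^ e) (∏ i, p i ^ ee i) := Nat.Coprime.prod_right fun i _ =>
      ((Nat.coprime_primes Nat.prime_two (hp i)).mpr (hp2 i).symm).pow _ _
    subst hn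
    have hprod := (DicksonFixes.pi hpe).of_injective (ZMod.prodEquivPi _ hpair).toRingHom
      (ZMod.prodEquivPi _ hpair).injective
    exact (h2.prod hprod).of_injective (ZMod.chineseRemainder hcop).toRingHom
      (ZMod.chineseRemainder hcop).injective

theorem dickson_identity_iff_local_even
    (e r : ℕ) (he : 1 ≤ e) (p ee : Fin r → ℕ)
    (hp : ∀ i, Nat.Prime (p i)) (hodd : ∀ i, Odd (p i)) (hmono : StrictMono p)
    (hee : ∀ i, 1 ≤ ee i)
    (n : ℕ) (hn : n = 2 ^ e * ∏ i, p i ^ ee i)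
    (l : Fin r → ℕ) (hl : ∀ i, l i = p i ^ (ee i - 1) * ((p i ^ 2 - 1) / 2))
    (l0 : ℕ) (hl0 : l0 = if e < 3 then 3 * 2 ^ (e - 1) else 3 * 2 ^ (e - 2))
    (w : ℕ) (hw : w = Nat.lcm l0 (Finset.univ.lcm l))
    (k : ℕ) (hk : 0 < k) (hgcd : Nat.gcd k w = 1) :
    (∀ u : ZMod n, Polynomial.eval u (Polynomial.dickson 1 1 k) = u) ↔
      ((∃ a0 : ℕ, 0 < a0 ∧ Nat.gcd a0 l0 = 1 ∧
          (∀ u : ZMod (2 ^ e), Polynomial.eval u (Polynomial.dickson 1 1 a0) = u) ∧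
          k ≡ a0 [MOD l0]) ∧
        ∀ i, ∃ a : ℕ, 0 < a ∧ Nat.gcd a (l i) = 1 ∧
          (∀ u : ZMod (p i ^ ee i), Polynomial.eval u (Polynomial.dickson 1 1 a) = u) ∧
          k ≡ a [MOD l i]) :=
  dickson_identity_iff_local_even_general e r p ee hp hodd hmono n hn l hl l0 hl0 w hw k hk hgcd
end

section
/- Let n = p_1^{e_1} ⋯ p_r^{e_r} be a product of powers of distinct odd primes. For each i, let K_{p_i^{e_i}} = { a ∈ ℤ/l_iℤ : a is a unit and, for some (equivalently every) positive-integer representative a' of a, D_{a'}(u,1) = u for all u ∈ ℤ/p_i^{e_i}ℤ }, and let K_n = { k ∈ ℤ/w(n)ℤ : k is a unit and, for some (equivalently every) positive-integer representative k' of k, D_{k'}(u,1) = u for all u ∈ ℤ/nℤ }. Let A_1 be the set of tuples (a_1, …, a_r) ∈ K_{p_1^{e_1}} × ⋯ × K_{p_r^{e_r}} such that the simultaneous congruence system x ≡ a_i (mod l_i) for i = 1, …, r has an integer solution. Then the map ρ_1 : A_1 → K_n sending (a_1, …, a_r) to the residue class modulo w(n) of a solution of this system is well defined and bijective. -/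
/-!
Write `C_m` for the Chebyshev form of `D_m(·, 1)`, indexed by `m ∈ ℤ`. The point is that
`m ↦ C_m(u)` is periodic with period `l = p^(e-1) (p² - 1) / 2` on `ℤ/p^eℤ`. Granting this, the
Dickson condition on `k` only depends on `k mod l_i`, the condition modulo `n` splits into the
conditions modulo the `p_i^e_i`, and `ρ` is just the Chinese remainder correspondence between
compatible residue tuples and residues modulo `w(n) = lcm l_i`.

For `e = 1`, write `u = x + x⁻¹` in an algebraic closure of `𝔽_p`: the Frobenius sends `x` to a root
of `X² - uX + 1`, i.e. to `x` or `x⁻¹`, so `x^(p-1) = 1` or `x^(p+1) = 1`, and in both cases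
`x^l = 1`. From `p^e` to `p^(e+1)`: with `q = p^e` we have `q² = 0` and `p q = 0` in `ℤ/p^(e+1)ℤ`.
The sequence `a_k = C_(m+kl)(u)` satisfies `a_(k+2) + a_k = C_l(u) a_(k+1)`, and `C_l(u) - 2` and
`a_1 - a_0` are multiples of `q` by periodicity modulo `p^e`. This forces
`a_k = a_0 + k (a_1 - a_0) + (k choose 2) (C_l(u) - 2) a_0`, and at `k = p` both correction terms
vanish.
-/

open Polynomial Function Finset

theorem eq_add_mul_add_choose_two_mul_of_recurrence {R : Type*} [CommRing R] {a : ℕ → R} {h : R}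
    (hrec : ∀ k, a (k + 2) + a k = (2 + h) * a (k + 1)) (hh : h ^ 2 = 0)
    (hd : h * (a 1 - a 0) = 0) (k : ℕ) :
    a k = a 0 + k * (a 1 - a 0) + k.choose 2 * (h * a 0) := by
  induction k using Nat.twoStepInduction with
  | zero => simp
  | one => simp
  | more k ih₀ ih₁ =>
    have hc₁ : (k + 1).choose 2 = k + k.choose 2 := by
      rw [Nat.choose_succ_succ', Nat.choose_one_right]
    have hc₂ : (k + 2).choose 2 = k + 1 + (k + 1).choose 2 := by
      rw [Nat.choose_succ_succ', Nat.choose_one_right]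
    rw [hc₁] at ih₁
    rw [hc₂, hc₁]
    push_cast at ih₁ ⊢
    linear_combination hrec k - ih₀ + (2 + h) * ih₁ + (k + 1) * hd + (k + k.choose 2) * a 0 * hh

theorem Odd.dvd_choose_two {p : ℕ} (hp : Odd p) : p ∣ p.choose 2 := by
  obtain ⟨k, rfl⟩ := hp
  rw [Nat.choose_two_right, Nat.add_sub_cancel, mul_left_comm, Nat.mul_div_cancel_left _ two_pos]
  exact dvd_mul_right _ _

theorem ZMod.natCast_dvd_of_castHom_eq_zero_s18 {a b : ℕ} [NeZero b] (h : a ∣ b) {x : ZMod b}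
    (hx : ZMod.castHom h (ZMod a) x = 0) : (a : ZMod b) ∣ x := by
  rw [← ZMod.natCast_zmod_val x, map_natCast, ZMod.natCast_eq_zero_iff] at hx
  obtain ⟨c, hc⟩ := hx
  rw [← ZMod.natCast_zmod_val x, hc, Nat.cast_mul]
  exact dvd_mul_right _ _

namespace Polynomial.Chebyshev

theorem C_eval_add_inv {F : Type*} [Field F] {x : F} (hx : x ≠ 0) (m : ℤ) :
    (C F m).eval (x + x⁻¹) = x ^ m + x⁻¹ ^ m := by
  obtain ⟨n, rfl | rfl⟩ := Int.eq_nat_or_neg m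
  · rw [← dickson_one_one_eq_chebyshev_C, dickson_one_one_eval_add_inv _ _ (mul_inv_cancel₀ hx)]
    simp
  · rw [C_neg, ← dickson_one_one_eq_chebyshev_C,
      dickson_one_one_eval_add_inv _ _ (mul_inv_cancel₀ hx)]
    simp [add_comm]

theorem C_eval_map {R S : Type*} [CommRing R] [CommRing S] (f : R →+* S) (u : R) (m : ℤ) :
    f ((C R m).eval u) = (C S m).eval (f u) := by
  let := f.toAlgebra
  exact algebraMap_eval_C u m

theorem periodic_C_eval_of_injective {R S : Type*} [CommRing R] [CommRing S] {f : R →+* S}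
    (hf : Injective f) {u : R} {L : ℤ} (h : Periodic (fun m => (C S m).eval (f u)) L) :
    Periodic (fun m => (C R m).eval u) L :=
  fun m => hf <| by simpa only [C_eval_map] using h m

theorem periodic_C_eval_zmod {p : ℕ} [hp : Fact p.Prime] (hodd : Odd p) (u : ZMod p) :
    Periodic (fun m : ℤ => (C (ZMod p) m).eval u) ((p ^ 2 - 1) / 2 : ℕ) := by
  let F := AlgebraicClosure (ZMod p)
  obtain ⟨x, hx⟩ : ∃ x : F, x ^ 2 - algebraMap (ZMod p) F u * x + 1 = 0 := by
    obtain ⟨x, hx⟩ := IsAlgClosed.exists_root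
      (X ^ 2 - Polynomial.C (algebraMap (ZMod p) F u) * X + 1 : F[X])
      (by rw [show (X ^ 2 - Polynomial.C _ * X + 1 : F[X]).degree = 2 by compute_degree!]; decide)
    exact ⟨x, by simpa using hx⟩
  have hx0 : x ≠ 0 := by rintro rfl; simp at hx
  have hu : algebraMap (ZMod p) F u = x + x⁻¹ := by
    have : x * (x + x⁻¹ - algebraMap (ZMod p) F u) = 0 := by
      linear_combination hx + mul_inv_cancel₀ hx0
    exact (sub_eq_zero.mp ((mul_eq_zero.mp this).resolve_left hx0)).symm
  have hfrob : x ^ p = x ∨ x ^ p = x⁻¹ := by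
    have h : (x ^ p) ^ 2 - algebraMap (ZMod p) F u * x ^ p + 1 = 0 := by
      have := congrArg (· ^ p) hx
      simpa [sub_pow_char, add_pow_char, mul_pow, ← map_pow, ← pow_mul, mul_comm,
        hp.out.ne_zero] using this
    have : (x ^ p - x) * (x ^ p - x⁻¹) = 0 := by
      linear_combination h + x ^ p * hu + mul_inv_cancel₀ hx0
    exact (mul_eq_zero.mp this).imp sub_eq_zero.mp sub_eq_zero.mp
  have hL : x ^ (((p ^ 2 - 1) / 2 : ℕ) : ℤ) = 1 := by
    obtain ⟨k, rfl⟩ := hodd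
    have hl : ((2 * k + 1) ^ 2 - 1) / 2 = 2 * k * (k + 1) := by
      rw [show (2 * k + 1) ^ 2 = 2 * (2 * k * (k + 1)) + 1 by ring, Nat.add_sub_cancel,
        Nat.mul_div_cancel_left _ two_pos]
    rw [zpow_natCast, hl]
    rcases hfrob with h | h
    · rw [pow_succ, mul_eq_right₀ hx0] at h
      rw [pow_mul, h, one_pow]
    · rw [show 2 * k * (k + 1) = (2 * k + 1 + 1) * k by ring, pow_mul, pow_succ, h,
        inv_mul_cancel₀ hx0, one_pow]
  refine periodic_C_eval_of_injective (algebraMap (ZMod p) F).injective fun m => ?_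
  dsimp only
  rw [hu, C_eval_add_inv hx0, C_eval_add_inv hx0, zpow_add₀ hx0, zpow_add₀ (inv_ne_zero hx0),
    inv_zpow x (((p ^ 2 - 1) / 2 : ℕ) : ℤ), hL, inv_one, mul_one, mul_one]

theorem periodic_C_eval_mul_of_dvd {R : Type*} [CommRing R] {p : ℕ} (hp : Odd p) {q u : R}
    {L : ℤ} (hq : q ^ 2 = 0) (hpq : (p : R) * q = 0)
    (hL : ∀ m, q ∣ (C R (m + L)).eval u - (C R m).eval u) :
    Periodic (fun m : ℤ => (C R m).eval u) (p * L) := by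
  intro m
  let a : ℕ → R := fun k => (C R (m + k * L)).eval u
  obtain ⟨s, hs⟩ : q ∣ (C R L).eval u - 2 := by simpa using hL 0
  obtain ⟨t, ht⟩ : q ∣ a 1 - a 0 := by simpa [a] using hL m
  have hrec : ∀ k, a (k + 2) + a k = (2 + q * s) * a (k + 1) := by
    intro k
    have h := congrArg (eval u) (C_mul_C R (m + (k + 1) * L) L)
    rw [eval_mul, eval_add, show m + (k + 1) * L + L = m + (k + 2) * L by ring,
      show m + (k + 1) * L - L = m + k * L by ring] at h
    simp only [a]
    push_cast
    linear_combination -h + (C R (m + (k + 1) * L)).eval u * hs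
  have key := eq_add_mul_add_choose_two_mul_of_recurrence hrec (by rw [mul_pow, hq, zero_mul])
    (by rw [ht]; linear_combination s * t * hq) p
  obtain ⟨j, hj⟩ := hp.dvd_choose_two
  have : a p = a 0 := by
    rw [key, ht, hj]
    push_cast
    linear_combination (t + j * s * a 0) * hpq
  simpa [a] using this

theorem periodic_C_eval_zmod_prime_pow {p : ℕ} [Fact p.Prime] (hodd : Odd p) (e : ℕ)
    (u : ZMod (p ^ (e + 1))) :
    Periodic (fun m : ℤ => (C (ZMod (p ^ (e + 1))) m).eval u) (p ^ e * ((p ^ 2 - 1) / 2) : ℕ) := by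
  induction e with
  | zero =>
    rw [pow_zero, one_mul]
    exact periodic_C_eval_of_injective (f := (ZMod.ringEquivCongr (pow_one p) : _ →+* _))
      (ZMod.ringEquivCongr _).injective (periodic_C_eval_zmod hodd _)
  | succ e ih =>
    have hdvd : p ^ (e + 1) ∣ p ^ (e + 2) := pow_dvd_pow p (by omega)
    have hq : ((p ^ (e + 1) : ℕ) : ZMod (p ^ (e + 2))) ^ 2 = 0 := by
      rw [← Nat.cast_pow, ZMod.natCast_eq_zero_iff, ← pow_mul]
      exact pow_dvd_pow p (by omega)
    have hpq : (p : ZMod (p ^ (e + 2))) * (p ^ (e + 1) : ℕ) = 0 := by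
      rw [← Nat.cast_mul, ← pow_succ', ZMod.natCast_self]
    have := periodic_C_eval_mul_of_dvd hodd hq hpq (u := u) (L := (p ^ e * ((p ^ 2 - 1) / 2) : ℕ))
      fun m => ZMod.natCast_dvd_of_castHom_eq_zero_s18 hdvd <| by
        rw [map_sub, C_eval_map, C_eval_map, sub_eq_zero]
        exact ih _ m
    rwa [← Nat.cast_mul, ← mul_assoc, ← pow_succ'] at this

end Polynomial.Chebyshev

namespace Polynomial

theorem dickson_one_one_eval_map {R S : Type*} [CommRing R] [CommRing S] (f : R →+* S) (u : R)
    (k : ℕ) : f ((dickson 1 (1 : R) k).eval u) = (dickson 1 (1 : S) k).eval (f u) := by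
  rw [← eval₂_at_apply, ← eval_map, map_dickson, map_one]

theorem dickson_one_one_eval_eq_of_modEq {p : ℕ} [Fact p.Prime] (hodd : Odd p) (e : ℕ) {a b : ℕ}
    (hab : a ≡ b [MOD p ^ e * ((p ^ 2 - 1) / 2)]) (u : ZMod (p ^ (e + 1))) :
    (dickson 1 1 a).eval u = (dickson 1 1 b).eval u := by
  obtain ⟨t, ht⟩ := Int.modEq_iff_add_fac.mp (Int.natCast_modEq_iff.mpr hab)
  rw [dickson_one_one_eq_chebyshev_C, dickson_one_one_eq_chebyshev_C, ht, mul_comm]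
  exact ((Chebyshev.periodic_C_eval_zmod_prime_pow hodd e u).int_mul t a).symm

end Polynomial

theorem Nat.coprime_finset_lcm_right_iff {ι : Type*} {s : Finset ι} {l : ι → ℕ} {k : ℕ} :
    k.Coprime (s.lcm l) ↔ ∀ i ∈ s, k.Coprime (l i) :=
  ⟨fun h _ hi => h.coprime_dvd_right (dvd_lcm hi),
    fun h => (Nat.coprime_prod_right_iff.2 h).coprime_dvd_right (lcm_dvd_prod s l)⟩

theorem ZMod.intCast_eq_intCast_finset_lcm_iff {ι : Type*} {s : Finset ι} {l : ι → ℕ}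
    {x y : ℤ} : (x : ZMod (s.lcm l)) = y ↔ ∀ i ∈ s, (x : ZMod (l i)) = y := by
  simp only [ZMod.intCast_eq_intCast_iff_dvd_sub, Int.ofNat_dvd_left, Finset.lcm_dvd_iff]

theorem exists_bijective_of_intCast_mem_iff {ι : Type*} [Fintype ι] (l : ι → ℕ)
    (K : ∀ i, Set (ZMod (l i))) (K' : Set (ZMod (univ.lcm l)))
    (hK : ∀ x : ℤ, (x : ZMod (univ.lcm l)) ∈ K' ↔ ∀ i, (x : ZMod (l i)) ∈ K i) :
    ∃ ρ : {a : ∀ i, ZMod (l i) | (∀ i, a i ∈ K i) ∧ ∃ x : ℤ, ∀ i, (x : ZMod (l i)) = a i} → K',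
      (∀ (a : {a : ∀ i, ZMod (l i) | (∀ i, a i ∈ K i) ∧ ∃ x : ℤ, ∀ i, (x : ZMod (l i)) = a i})
        (x : ℤ), (∀ i, (x : ZMod (l i)) = (a : ∀ i, ZMod (l i)) i) →
        (ρ a : ZMod (univ.lcm l)) = (x : ZMod (univ.lcm l))) ∧ Bijective ρ := by
  have crt {x y : ℤ} : (x : ZMod (univ.lcm l)) = y ↔ ∀ i, (x : ZMod (l i)) = y := by
    simp [ZMod.intCast_eq_intCast_finset_lcm_iff]
  let A := {a : ∀ i, ZMod (l i) | (∀ i, a i ∈ K i) ∧ ∃ x : ℤ, ∀ i, (x : ZMod (l i)) = a i}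
  let ρ : A → K' := fun a => ⟨a.2.2.choose, (hK _).2 fun i => a.2.2.choose_spec i ▸ a.2.1 i⟩
  have hρ : ∀ (a : A) (x : ℤ), (∀ i, (x : ZMod (l i)) = (a : ∀ i, ZMod (l i)) i) →
      (ρ a : ZMod (univ.lcm l)) = x :=
    fun a x hx => crt.2 fun i => (a.2.2.choose_spec i).trans (hx i).symm
  refine ⟨ρ, hρ, fun a b hab => ?_, fun c => ?_⟩
  · obtain ⟨x, hx⟩ := a.2.2
    obtain ⟨y, hy⟩ := b.2.2
    have hxy := crt.1 (((hρ a x hx).symm.trans (congrArg Subtype.val hab)).trans (hρ b y hy))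
    exact Subtype.ext <| funext fun i => (hx i).symm.trans ((hxy i).trans (hy i))
  · set x : ℤ := (c : ZMod (univ.lcm l)).cast
    have hx : (x : ZMod (univ.lcm l)) = c := ZMod.intCast_zmod_cast _
    refine ⟨⟨fun i => x, (hK x).1 (hx ▸ c.2), x, fun _ => rfl⟩, Subtype.ext ?_⟩
    exact (hρ _ x fun _ => rfl).trans hx

def IsDicksonIdentity (N k : ℕ) : Prop :=
  ∀ u : ZMod N, (dickson 1 (1 : ZMod N) k).eval u = u

/-- The paper's `K_N`, read in `ℤ/Lℤ` with `L = l_i` or `L = w(n)`. -/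
def dicksonKernel (N L : ℕ) : Set (ZMod L) :=
  {a | IsUnit a ∧ ∃ k : ℕ, 0 < k ∧ (k : ZMod L) = a ∧ IsDicksonIdentity N k}

theorem isDicksonIdentity_prod_iff {ι : Type*} [Fintype ι] {q : ι → ℕ}
    (hq : Pairwise (Nat.Coprime on q)) (k : ℕ) :
    IsDicksonIdentity (∏ i, q i) k ↔ ∀ i, IsDicksonIdentity (q i) k := by
  refine ⟨fun h i v => ?_, fun h u => (ZMod.prodEquivPi q hq).injective <| funext fun i => ?_⟩
  · obtain ⟨u, rfl⟩ := ZMod.castHom_surjective (dvd_prod_of_mem q (mem_univ i)) v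
    rw [← dickson_one_one_eval_map, h u]
  · rw [ZMod.prodEquivPi_apply, ZMod.prodEquivPi_apply, dickson_one_one_eval_map, h i]

theorem natCast_mem_dicksonKernel_iff {N L k : ℕ} (hk : 0 < k)
    (hinv : ∀ {a b : ℕ}, a ≡ b [MOD L] → IsDicksonIdentity N a → IsDicksonIdentity N b) :
    (k : ZMod L) ∈ dicksonKernel N L ↔ IsUnit (k : ZMod L) ∧ IsDicksonIdentity N k :=
  ⟨fun ⟨hu, _, _, hk', hD⟩ => ⟨hu, hinv ((ZMod.natCast_eq_natCast_iff _ _ _).1 hk') hD⟩,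
    fun ⟨hu, hD⟩ => ⟨hu, k, hk, rfl, hD⟩⟩

theorem intCast_mem_dicksonKernel_lcm_iff {ι : Type*} [Fintype ι] {q l : ι → ℕ}
    (hq : Pairwise (Nat.Coprime on q)) (hl : ∀ i, l i ≠ 0)
    (hinv : ∀ i {a b : ℕ}, a ≡ b [MOD l i] → IsDicksonIdentity (q i) a → IsDicksonIdentity (q i) b)
    (x : ℤ) :
    (x : ZMod (univ.lcm l)) ∈ dicksonKernel (∏ i, q i) (univ.lcm l) ↔
      ∀ i, (x : ZMod (l i)) ∈ dicksonKernel (q i) (l i) := by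
  have hw : univ.lcm l ≠ 0 := by simpa [Finset.lcm_eq_zero_iff] using hl
  set k := (x : ZMod (univ.lcm l)).val + univ.lcm l
  have hk0 : 0 < k := by omega
  have hkw : ((k : ℤ) : ZMod (univ.lcm l)) = x := by
    have : NeZero (univ.lcm l) := ⟨hw⟩
    simp [k]
  have hkl : ∀ i, (k : ZMod (l i)) = x := fun i => by
    exact_mod_cast ZMod.intCast_eq_intCast_finset_lcm_iff.1 hkw i (mem_univ i)
  have hinvw {a b : ℕ} (hab : a ≡ b [MOD univ.lcm l]) :
      IsDicksonIdentity (∏ i, q i) a → IsDicksonIdentity (∏ i, q i) b := by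
    simp only [isDicksonIdentity_prod_iff hq]
    exact fun h i => hinv i (hab.of_dvd (dvd_lcm (mem_univ i))) (h i)
  rw [← hkw, Int.cast_natCast, natCast_mem_dicksonKernel_iff hk0 hinvw]
  simp only [← hkl, natCast_mem_dicksonKernel_iff hk0 (hinv _), forall_and,
    ZMod.isUnit_iff_coprime, Nat.coprime_finset_lcm_right_iff, isDicksonIdentity_prod_iff hq,
    mem_univ, true_imp_iff]

theorem crt_bijection_kernel
    (r : ℕ) (p ee : Fin r → ℕ)
    (hp : ∀ i, Nat.Prime (p i)) (hodd : ∀ i, Odd (p i)) (hmono : StrictMono p)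
    (hee : ∀ i, 1 ≤ ee i)
    (n : ℕ) (hn : n = ∏ i, p i ^ ee i)
    (l : Fin r → ℕ) (hl : ∀ i, l i = p i ^ (ee i - 1) * ((p i ^ 2 - 1) / 2))
    (w : ℕ) (hw : w = Finset.univ.lcm l)
    (K : ∀ i, Set (ZMod (l i)))
    (hK : ∀ i, K i = {a : ZMod (l i) | IsUnit a ∧ ∃ a' : ℕ, 0 < a' ∧ (a' : ZMod (l i)) = a ∧
      ∀ u : ZMod (p i ^ ee i), Polynomial.eval u (Polynomial.dickson 1 1 a') = u})
    (Kn : Set (ZMod w))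
    (hKn : Kn = {c : ZMod w | IsUnit c ∧ ∃ k' : ℕ, 0 < k' ∧ (k' : ZMod w) = c ∧
      ∀ u : ZMod n, Polynomial.eval u (Polynomial.dickson 1 1 k') = u})
    (A : Set (∀ i, ZMod (l i)))
    (hA : A = {a : ∀ i, ZMod (l i) | (∀ i, a i ∈ K i) ∧ ∃ x : ℤ, ∀ i, (x : ZMod (l i)) = a i}) :
    ∃ ρ : A → Kn,
      (∀ (a : A) (x : ℤ), (∀ i, (x : ZMod (l i)) = (a : ∀ i, ZMod (l i)) i) →
        (ρ a : ZMod w) = (x : ZMod w)) ∧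
      Function.Bijective ρ := by
  obtain rfl : l = fun i => p i ^ (ee i - 1) * ((p i ^ 2 - 1) / 2) := funext hl
  obtain rfl : K = fun i => dicksonKernel (p i ^ ee i) (p i ^ (ee i - 1) * ((p i ^ 2 - 1) / 2)) :=
    funext hK
  subst hn hw hKn hA
  refine exists_bijective_of_intCast_mem_iff _ _ _ (intCast_mem_dicksonKernel_lcm_iff ?_ ?_ ?_)
  · exact fun i j hij =>
      ((Nat.coprime_primes (hp i) (hp j)).2 (hmono.injective.ne hij)).pow _ _
  · intro i
    have := Nat.pow_le_pow_left (hp i).two_le 2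
    exact Nat.mul_ne_zero (pow_ne_zero _ (hp i).ne_zero) (by omega)
  · intro i a b hab
    obtain ⟨e, he⟩ := Nat.exists_eq_add_of_le' (hee i)
    have := Fact.mk (hp i)
    simp only [he, Nat.add_sub_cancel] at hab ⊢
    exact fun ha u => dickson_one_one_eval_eq_of_modEq (hodd i) e hab u ▸ ha u
end
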